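/- arXiv:2412.20650 — 4 statements merged into one kernel-verified Lean document; each statement's English description precedes it below -/
import Mathlib

section
/- Let T > 0 and n, m ≥ 1. Let A, C, S₁ : [0,T] → ℝ^{n×n}, B, S₂ : [0,T] → ℝ^{n×m}, R₁₁ : [0,T] → Sym(n), R₂₂ : [0,T] → Sym(m) be continuous, and let K > 0 be such that R₂₂(t) is invertible with ‖R₂₂(t)⁻¹‖ ≤ K for every t ∈ [0,T]. Suppose Υ¹, Υ² : [0,T] → Sym(n) are differentiable, both satisfy the Υ-Riccati equation Υ'(t) = Υ(t)A(t)ᵀ + A(t)Υ(t) − (C(t)+Υ(t)S₁(t))(I+Υ(t)R₁₁(t))⁻¹Υ(t)(C(t)ᵀ+S₁(t)ᵀΥ(t)) − (B(t)+Υ(t)S₂(t))R₂₂(t)⁻¹(B(t)ᵀ+S₂(t)ᵀΥ(t)) for all t ∈ [0,T], where for i = 1, 2 and every t ∈ [0,T] the matrix I + Υⁱ(t)R₁₁(t) is invertible with ‖(I + Υⁱ(t)R₁₁(t))⁻¹‖ ≤ K, and suppose Υ¹(T) = Υ²(T). Then Υ¹(t) = Υ²(t) for all t ∈ [0,T]. (Uniqueness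 part of the solvability theorem for the backward Riccati equation.) -/
open Matrix
open scoped Matrix.Norms.L2Operator


private lemma prod3_le {p q r s : ℕ} (a : Matrix (Fin p) (Fin q) ℝ) (b : Matrix (Fin q) (Fin r) ℝ)
    (c : Matrix (Fin r) (Fin s) ℝ) : ‖a * b * c‖ ≤ ‖a‖ * ‖b‖ * ‖c‖ :=
  (Matrix.l2_opNorm_mul _ _).trans
    (mul_le_mul_of_nonneg_right (Matrix.l2_opNorm_mul _ _) (norm_nonneg _))

private lemma tele3 {p q r s : ℕ} (a₁ a₂ : Matrix (Fin p) (Fin q) ℝ) (b₁ b₂ : Matrix (Fin q) (Fin r) ℝ)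
    (c₁ c₂ : Matrix (Fin r) (Fin s) ℝ) :
    ‖a₁ * b₁ * c₁ - a₂ * b₂ * c₂‖ ≤ ‖a₁ - a₂‖ * ‖b₁‖ * ‖c₁‖ + ‖a₂‖ * ‖b₁ - b₂‖ * ‖c₁‖
      + ‖a₂‖ * ‖b₂‖ * ‖c₁ - c₂‖ := by
  have h : a₁ * b₁ * c₁ - a₂ * b₂ * c₂
      = (a₁ - a₂) * b₁ * c₁ + a₂ * (b₁ - b₂) * c₁ + a₂ * b₂ * (c₁ - c₂) := by
    simp only [Matrix.sub_mul, Matrix.mul_sub]; abel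
  rw [h]
  exact le_trans (norm_add_le _ _)
    (add_le_add (le_trans (norm_add_le _ _) (add_le_add (prod3_le _ _ _) (prod3_le _ _ _)))
      (prod3_le _ _ _))

private lemma prod4_le {p q r s u : ℕ} (a : Matrix (Fin p) (Fin q) ℝ) (b : Matrix (Fin q) (Fin r) ℝ)
    (c : Matrix (Fin r) (Fin s) ℝ) (d : Matrix (Fin s) (Fin u) ℝ) :
    ‖a * b * c * d‖ ≤ ‖a‖ * ‖b‖ * ‖c‖ * ‖d‖ :=
  (Matrix.l2_opNorm_mul _ _).trans
    (mul_le_mul_of_nonneg_right (prod3_le a b c) (norm_nonneg _))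

private lemma tele4 {p q r s u : ℕ} (a₁ a₂ : Matrix (Fin p) (Fin q) ℝ)
    (b₁ b₂ : Matrix (Fin q) (Fin r) ℝ) (c₁ c₂ : Matrix (Fin r) (Fin s) ℝ)
    (d₁ d₂ : Matrix (Fin s) (Fin u) ℝ) :
    ‖a₁ * b₁ * c₁ * d₁ - a₂ * b₂ * c₂ * d₂‖ ≤ ‖a₁ - a₂‖ * ‖b₁‖ * ‖c₁‖ * ‖d₁‖
      + ‖a₂‖ * ‖b₁ - b₂‖ * ‖c₁‖ * ‖d₁‖ + ‖a₂‖ * ‖b₂‖ * ‖c₁ - c₂‖ * ‖d₁‖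
      + ‖a₂‖ * ‖b₂‖ * ‖c₂‖ * ‖d₁ - d₂‖ := by
  have h : a₁ * b₁ * c₁ * d₁ - a₂ * b₂ * c₂ * d₂
      = (a₁ - a₂) * b₁ * c₁ * d₁ + a₂ * (b₁ - b₂) * c₁ * d₁ + a₂ * b₂ * (c₁ - c₂) * d₁
        + a₂ * b₂ * c₂ * (d₁ - d₂) := by
    simp only [Matrix.sub_mul, Matrix.mul_sub]; abel
  rw [h]
  exact le_trans (norm_add_le _ _)
    (add_le_add (le_trans (norm_add_le _ _)
      (add_le_add (le_trans (norm_add_le _ _)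
        (add_le_add (prod4_le _ _ _ _) (prod4_le _ _ _ _))) (prod4_le _ _ _ _)))
      (prod4_le _ _ _ _))

private lemma mul_le_mul₃ {a b c a' b' c' : ℝ} (ha : a ≤ a') (hb : b ≤ b') (hc : c ≤ c')
    (hb0 : 0 ≤ b) (hc0 : 0 ≤ c) (ha'0 : 0 ≤ a') (hb'0 : 0 ≤ b') :
    a * b * c ≤ a' * b' * c' :=
  mul_le_mul (mul_le_mul ha hb hb0 ha'0) hc hc0 (mul_nonneg ha'0 hb'0)

private lemma mul_le_mul₄ {a b c d a' b' c' d' : ℝ} (ha : a ≤ a') (hb : b ≤ b') (hc : c ≤ c')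
    (hd : d ≤ d') (hb0 : 0 ≤ b) (hc0 : 0 ≤ c) (hd0 : 0 ≤ d)
    (ha'0 : 0 ≤ a') (hb'0 : 0 ≤ b') (hc'0 : 0 ≤ c') :
    a * b * c * d ≤ a' * b' * c' * d' :=
  mul_le_mul (mul_le_mul₃ ha hb hc hb0 hc0 ha'0 hb'0) hd hd0
    (mul_nonneg (mul_nonneg ha'0 hb'0) hc'0)

private lemma normTranspose' {p q : ℕ} (X : Matrix (Fin p) (Fin q) ℝ) : ‖Xᵀ‖ = ‖X‖ := by
  rw [← Matrix.conjTranspose_eq_transpose_of_trivial]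
  exact Matrix.l2_opNorm_conjTranspose X

private lemma riccati_lip {n m : ℕ} (A C S₁ R Y₁ Y₂ : Matrix (Fin n) (Fin n) ℝ)
    (B S₂ : Matrix (Fin n) (Fin m) ℝ) (R₂ : Matrix (Fin m) (Fin m) ℝ)
    (M K : ℝ) (hM : 1 ≤ M) (hK : 1 ≤ K)
    (hA : ‖A‖ ≤ M) (hB : ‖B‖ ≤ M) (hC : ‖C‖ ≤ M) (hS₁ : ‖S₁‖ ≤ M) (hS₂ : ‖S₂‖ ≤ M)
    (hR : ‖R‖ ≤ M) (hY₁ : ‖Y₁‖ ≤ M) (hY₂ : ‖Y₂‖ ≤ M) (hR₂ : ‖R₂⁻¹‖ ≤ K)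
    (hE₁ : ‖(1 + Y₁ * R)⁻¹‖ ≤ K) (hE₂ : ‖(1 + Y₂ * R)⁻¹‖ ≤ K)
    (hU₁ : (1 + Y₁ * R)⁻¹ * (1 + Y₁ * R) = 1) (hU₂ : (1 + Y₂ * R) * (1 + Y₂ * R)⁻¹ = 1) :
    ‖(Y₁ * Aᵀ + A * Y₁ - (C + Y₁ * S₁) * (1 + Y₁ * R)⁻¹ * Y₁ * (Cᵀ + S₁ᵀ * Y₁)
        - (B + Y₁ * S₂) * R₂⁻¹ * (Bᵀ + S₂ᵀ * Y₁))
      - (Y₂ * Aᵀ + A * Y₂ - (C + Y₂ * S₁) * (1 + Y₂ * R)⁻¹ * Y₂ * (Cᵀ + S₁ᵀ * Y₂)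
        - (B + Y₂ * S₂) * R₂⁻¹ * (Bᵀ + S₂ᵀ * Y₂))‖
      ≤ (2 * M + 8 * K * M ^ 4 + 4 * K ^ 2 * M ^ 6 + 4 * K * M ^ 3) * ‖Y₁ - Y₂‖ := by
  have hM0 : (0:ℝ) ≤ M := le_trans zero_le_one hM
  have hK0 : (0:ℝ) ≤ K := le_trans zero_le_one hK
  set D := ‖Y₁ - Y₂‖ with hDdef
  have hD0 : 0 ≤ D := norm_nonneg _
  -- bounds on the factors
  have haux : ∀ (X Y : Matrix (Fin n) (Fin n) ℝ) (W : Matrix (Fin n) (Fin n) ℝ),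
      ‖X‖ ≤ M → ‖Y‖ ≤ M → ‖W‖ ≤ M → ‖X + Y * W‖ ≤ 2 * M ^ 2 := by
    intro X Y W hX hY hW
    calc ‖X + Y * W‖ ≤ ‖X‖ + ‖Y‖ * ‖W‖ :=
          (norm_add_le _ _).trans (add_le_add le_rfl (Matrix.l2_opNorm_mul _ _))
    _ ≤ M + M * M := add_le_add hX (mul_le_mul hY hW (norm_nonneg _) hM0)
    _ ≤ 2 * M ^ 2 := by nlinarith
  have hauxm : ∀ (X : Matrix (Fin n) (Fin m) ℝ) (Y : Matrix (Fin n) (Fin n) ℝ)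
      (W : Matrix (Fin n) (Fin m) ℝ),
      ‖X‖ ≤ M → ‖Y‖ ≤ M → ‖W‖ ≤ M → ‖X + Y * W‖ ≤ 2 * M ^ 2 := by
    intro X Y W hX hY hW
    calc ‖X + Y * W‖ ≤ ‖X‖ + ‖Y‖ * ‖W‖ :=
          (norm_add_le _ _).trans (add_le_add le_rfl (Matrix.l2_opNorm_mul _ _))
    _ ≤ M + M * M := add_le_add hX (mul_le_mul hY hW (norm_nonneg _) hM0)
    _ ≤ 2 * M ^ 2 := by nlinarith
  have hCt : ‖Cᵀ‖ ≤ M := (normTranspose' C).le.trans hC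
  have hS₁t : ‖S₁ᵀ‖ ≤ M := (normTranspose' S₁).le.trans hS₁
  have hBt : ‖Bᵀ‖ ≤ M := (normTranspose' B).le.trans hB
  have hS₂t : ‖S₂ᵀ‖ ≤ M := (normTranspose' S₂).le.trans hS₂
  have hAt : ‖Aᵀ‖ ≤ M := (normTranspose' A).le.trans hA
  have hauxt : ∀ (X W : Matrix (Fin n) (Fin n) ℝ) (Y : Matrix (Fin n) (Fin n) ℝ),
      ‖X‖ ≤ M → ‖W‖ ≤ M → ‖Y‖ ≤ M → ‖X + W * Y‖ ≤ 2 * M ^ 2 := haux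
  have hauxtm : ∀ (X : Matrix (Fin m) (Fin n) ℝ) (W : Matrix (Fin m) (Fin n) ℝ),
      True := fun _ _ => trivial
  -- difference bounds on the factors
  have hdiff_a : ‖(C + Y₁ * S₁) - (C + Y₂ * S₁)‖ ≤ D * M := by
    have h : (C + Y₁ * S₁) - (C + Y₂ * S₁) = (Y₁ - Y₂) * S₁ := by noncomm_ring
    rw [h]
    exact (Matrix.l2_opNorm_mul _ _).trans (mul_le_mul_of_nonneg_left hS₁ hD0)
  have hdiff_d : ‖(Cᵀ + S₁ᵀ * Y₁) - (Cᵀ + S₁ᵀ * Y₂)‖ ≤ M * D := by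
    have h : (Cᵀ + S₁ᵀ * Y₁) - (Cᵀ + S₁ᵀ * Y₂) = S₁ᵀ * (Y₁ - Y₂) := by noncomm_ring
    rw [h]
    exact (Matrix.l2_opNorm_mul _ _).trans (mul_le_mul_of_nonneg_right hS₁t hD0)
  have hdiff_ab : ‖(B + Y₁ * S₂) - (B + Y₂ * S₂)‖ ≤ D * M := by
    have h : (B + Y₁ * S₂) - (B + Y₂ * S₂) = (Y₁ - Y₂) * S₂ := by
      rw [add_sub_add_left_eq_sub, ← Matrix.sub_mul]
    rw [h]
    exact (Matrix.l2_opNorm_mul _ _).trans (mul_le_mul_of_nonneg_left hS₂ hD0)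
  have hdiff_db : ‖(Bᵀ + S₂ᵀ * Y₁) - (Bᵀ + S₂ᵀ * Y₂)‖ ≤ M * D := by
    have h : (Bᵀ + S₂ᵀ * Y₁) - (Bᵀ + S₂ᵀ * Y₂) = S₂ᵀ * (Y₁ - Y₂) := by
      rw [add_sub_add_left_eq_sub, ← Matrix.mul_sub]
    rw [h]
    exact (Matrix.l2_opNorm_mul _ _).trans (mul_le_mul_of_nonneg_right hS₂t hD0)
  have hdiff_E : ‖(1 + Y₁ * R)⁻¹ - (1 + Y₂ * R)⁻¹‖ ≤ K * (D * M) * K := by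
    have heq : (1 + Y₁ * R)⁻¹ - (1 + Y₂ * R)⁻¹
        = (1 + Y₁ * R)⁻¹ * ((Y₂ - Y₁) * R) * (1 + Y₂ * R)⁻¹ := by
      have h1 : (1 + Y₁ * R)⁻¹ * ((Y₂ - Y₁) * R) * (1 + Y₂ * R)⁻¹
          = (1 + Y₁ * R)⁻¹ * ((1 + Y₂ * R) * (1 + Y₂ * R)⁻¹)
            - ((1 + Y₁ * R)⁻¹ * (1 + Y₁ * R)) * (1 + Y₂ * R)⁻¹ := by noncomm_ring
      rw [h1, hU₂, hU₁, mul_one, one_mul]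
    rw [heq]
    have hmid : ‖(Y₂ - Y₁) * R‖ ≤ D * M := by
      refine (Matrix.l2_opNorm_mul _ _).trans ?_
      rw [norm_sub_rev]
      exact mul_le_mul_of_nonneg_left hR hD0
    exact (prod3_le _ _ _).trans
      (mul_le_mul₃ hE₁ hmid hE₂ (norm_nonneg _) (norm_nonneg _) hK0
        (mul_nonneg hD0 hM0))
  -- split the difference
  have hsplit : (Y₁ * Aᵀ + A * Y₁ - (C + Y₁ * S₁) * (1 + Y₁ * R)⁻¹ * Y₁ * (Cᵀ + S₁ᵀ * Y₁)
        - (B + Y₁ * S₂) * R₂⁻¹ * (Bᵀ + S₂ᵀ * Y₁))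
      - (Y₂ * Aᵀ + A * Y₂ - (C + Y₂ * S₁) * (1 + Y₂ * R)⁻¹ * Y₂ * (Cᵀ + S₁ᵀ * Y₂)
        - (B + Y₂ * S₂) * R₂⁻¹ * (Bᵀ + S₂ᵀ * Y₂))
      = ((Y₁ - Y₂) * Aᵀ + A * (Y₁ - Y₂))
        - ((C + Y₁ * S₁) * (1 + Y₁ * R)⁻¹ * Y₁ * (Cᵀ + S₁ᵀ * Y₁)
          - (C + Y₂ * S₁) * (1 + Y₂ * R)⁻¹ * Y₂ * (Cᵀ + S₁ᵀ * Y₂))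
        - ((B + Y₁ * S₂) * R₂⁻¹ * (Bᵀ + S₂ᵀ * Y₁)
          - (B + Y₂ * S₂) * R₂⁻¹ * (Bᵀ + S₂ᵀ * Y₂)) := by
    simp only [Matrix.sub_mul, Matrix.mul_sub]; abel
  rw [hsplit]
  have h2M2 : (0:ℝ) ≤ 2 * M ^ 2 := by positivity
  have hQ : ‖(C + Y₁ * S₁) * (1 + Y₁ * R)⁻¹ * Y₁ * (Cᵀ + S₁ᵀ * Y₁)
        - (C + Y₂ * S₁) * (1 + Y₂ * R)⁻¹ * Y₂ * (Cᵀ + S₁ᵀ * Y₂)‖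
      ≤ (D * M) * K * M * (2 * M ^ 2) + (2 * M ^ 2) * (K * (D * M) * K) * M * (2 * M ^ 2)
        + (2 * M ^ 2) * K * D * (2 * M ^ 2) + (2 * M ^ 2) * K * M * (M * D) := by
    refine (tele4 _ _ _ _ _ _ _ _).trans ?_
    have b1 := haux C Y₁ S₁ hC hY₁ hS₁
    have b2 := haux C Y₂ S₁ hC hY₂ hS₁
    have b3 := haux Cᵀ S₁ᵀ Y₁ hCt hS₁t hY₁
    have b4 := haux Cᵀ S₁ᵀ Y₂ hCt hS₁t hY₂
    refine add_le_add (add_le_add (add_le_add ?_ ?_) ?_) ?_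
    · exact mul_le_mul₄ hdiff_a hE₁ hY₁ b3 (norm_nonneg _) (norm_nonneg _) (norm_nonneg _)
        (mul_nonneg hD0 hM0) hK0 hM0
    · exact mul_le_mul₄ b2 hdiff_E hY₁ b3 (norm_nonneg _) (norm_nonneg _) (norm_nonneg _)
        h2M2 (by positivity) hM0
    · exact mul_le_mul₄ b2 hE₂ le_rfl b3 (norm_nonneg _) (norm_nonneg _) (norm_nonneg _)
        h2M2 hK0 hD0
    · exact mul_le_mul₄ b2 hE₂ hY₂ hdiff_d (norm_nonneg _) (norm_nonneg _) (norm_nonneg _)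
        h2M2 hK0 hM0
  have hP : ‖(B + Y₁ * S₂) * R₂⁻¹ * (Bᵀ + S₂ᵀ * Y₁)
        - (B + Y₂ * S₂) * R₂⁻¹ * (Bᵀ + S₂ᵀ * Y₂)‖
      ≤ (D * M) * K * (2 * M ^ 2) + (2 * M ^ 2) * 0 * (2 * M ^ 2)
        + (2 * M ^ 2) * K * (M * D) := by
    refine (tele3 _ _ _ _ _ _).trans ?_
    have b1 := hauxm B Y₂ S₂ hB hY₂ hS₂
    have b3 : ‖Bᵀ + S₂ᵀ * Y₁‖ ≤ 2 * M ^ 2 := by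
      calc ‖Bᵀ + S₂ᵀ * Y₁‖ ≤ ‖Bᵀ‖ + ‖S₂ᵀ‖ * ‖Y₁‖ :=
            (norm_add_le _ _).trans (add_le_add le_rfl (Matrix.l2_opNorm_mul _ _))
      _ ≤ M + M * M := add_le_add hBt (mul_le_mul hS₂t hY₁ (norm_nonneg _) hM0)
      _ ≤ 2 * M ^ 2 := by nlinarith
    refine add_le_add (add_le_add ?_ ?_) ?_
    · exact mul_le_mul₃ hdiff_ab hR₂ b3 (norm_nonneg _) (norm_nonneg _)
        (mul_nonneg hD0 hM0) hK0
    · simp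
    · exact mul_le_mul₃ b1 hR₂ hdiff_db (norm_nonneg _) (norm_nonneg _) h2M2 hK0
  have hlin : ‖(Y₁ - Y₂) * Aᵀ + A * (Y₁ - Y₂)‖ ≤ D * M + M * D := by
    refine (norm_add_le _ _).trans (add_le_add ?_ ?_)
    · exact (Matrix.l2_opNorm_mul _ _).trans (mul_le_mul_of_nonneg_left hAt hD0)
    · exact (Matrix.l2_opNorm_mul _ _).trans (mul_le_mul_of_nonneg_right hA hD0)
  have hsub3 : ∀ (a b c : Matrix (Fin n) (Fin n) ℝ), ‖a - b - c‖ ≤ ‖a‖ + ‖b‖ + ‖c‖ := by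
    intro a b c
    calc ‖a - b - c‖ ≤ ‖a - b‖ + ‖c‖ := norm_sub_le _ _
    _ ≤ ‖a‖ + ‖b‖ + ‖c‖ := add_le_add (norm_sub_le _ _) le_rfl
  refine le_trans (hsub3 _ _ _) ?_
  refine le_trans (add_le_add (add_le_add hlin hQ) hP) (le_of_eq (by ring))


/-- Uniqueness of symmetric solutions to the backward Υ-Riccati equation
`Υ' = ΥAᵀ + AΥ − (C+ΥS₁)(I+ΥR₁₁)⁻¹Υ(Cᵀ+S₁ᵀΥ) − (B+ΥS₂)R₂₂⁻¹(Bᵀ+S₂ᵀΥ)` on `[0,T]`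
under uniform invertibility bounds, given equal terminal values. -/
theorem riccati_backward_uniqueness {n m : ℕ} (hn : 1 ≤ n) (hm : 1 ≤ m)
    {T : ℝ} (hT : 0 < T)
    (A C S₁ : ℝ → Matrix (Fin n) (Fin n) ℝ)
    (B S₂ : ℝ → Matrix (Fin n) (Fin m) ℝ)
    (R₁₁ : ℝ → Matrix (Fin n) (Fin n) ℝ)
    (R₂₂ : ℝ → Matrix (Fin m) (Fin m) ℝ)
    (hA : ContinuousOn A (Set.Icc 0 T)) (hC : ContinuousOn C (Set.Icc 0 T))
    (hS₁ : ContinuousOn S₁ (Set.Icc 0 T)) (hB : ContinuousOn B (Set.Icc 0 T))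
    (hS₂ : ContinuousOn S₂ (Set.Icc 0 T)) (hR₁₁ : ContinuousOn R₁₁ (Set.Icc 0 T))
    (hR₂₂ : ContinuousOn R₂₂ (Set.Icc 0 T))
    (hR₁₁symm : ∀ t ∈ Set.Icc 0 T, (R₁₁ t).IsSymm)
    (hR₂₂symm : ∀ t ∈ Set.Icc 0 T, (R₂₂ t).IsSymm)
    (K : ℝ) (hK : 0 < K)
    (hR₂₂inv : ∀ t ∈ Set.Icc 0 T, IsUnit (R₂₂ t) ∧ ‖(R₂₂ t)⁻¹‖ ≤ K)
    (Υ₁ Υ₂ : ℝ → Matrix (Fin n) (Fin n) ℝ)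
    (hΥ₁symm : ∀ t ∈ Set.Icc 0 T, (Υ₁ t).IsSymm)
    (hΥ₂symm : ∀ t ∈ Set.Icc 0 T, (Υ₂ t).IsSymm)
    (hΥ₁inv : ∀ t ∈ Set.Icc 0 T,
      IsUnit (1 + Υ₁ t * R₁₁ t) ∧ ‖(1 + Υ₁ t * R₁₁ t)⁻¹‖ ≤ K)
    (hΥ₂inv : ∀ t ∈ Set.Icc 0 T,
      IsUnit (1 + Υ₂ t * R₁₁ t) ∧ ‖(1 + Υ₂ t * R₁₁ t)⁻¹‖ ≤ K)
    (hΥ₁ode : ∀ t ∈ Set.Icc 0 T, HasDerivWithinAt Υ₁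
      (Υ₁ t * (A t)ᵀ + A t * Υ₁ t
        - (C t + Υ₁ t * S₁ t) * (1 + Υ₁ t * R₁₁ t)⁻¹ * Υ₁ t * ((C t)ᵀ + (S₁ t)ᵀ * Υ₁ t)
        - (B t + Υ₁ t * S₂ t) * (R₂₂ t)⁻¹ * ((B t)ᵀ + (S₂ t)ᵀ * Υ₁ t))
      (Set.Icc 0 T) t)
    (hΥ₂ode : ∀ t ∈ Set.Icc 0 T, HasDerivWithinAt Υ₂
      (Υ₂ t * (A t)ᵀ + A t * Υ₂ t
        - (C t + Υ₂ t * S₁ t) * (1 + Υ₂ t * R₁₁ t)⁻¹ * Υ₂ t * ((C t)ᵀ + (S₁ t)ᵀ * Υ₂ t)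
        - (B t + Υ₂ t * S₂ t) * (R₂₂ t)⁻¹ * ((B t)ᵀ + (S₂ t)ᵀ * Υ₂ t))
      (Set.Icc 0 T) t)
    (hterm : Υ₁ T = Υ₂ T) :
    ∀ t ∈ Set.Icc 0 T, Υ₁ t = Υ₂ t := by
  have hc₁ : ContinuousOn Υ₁ (Set.Icc 0 T) := fun t ht => (hΥ₁ode t ht).continuousWithinAt
  have hc₂ : ContinuousOn Υ₂ (Set.Icc 0 T) := fun t ht => (hΥ₂ode t ht).continuousWithinAt
  obtain ⟨M₁, hM₁⟩ := isCompact_Icc.exists_bound_of_continuousOn hA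
  obtain ⟨M₂, hM₂⟩ := isCompact_Icc.exists_bound_of_continuousOn hB
  obtain ⟨M₃, hM₃⟩ := isCompact_Icc.exists_bound_of_continuousOn hC
  obtain ⟨M₄, hM₄⟩ := isCompact_Icc.exists_bound_of_continuousOn hS₁
  obtain ⟨M₅, hM₅⟩ := isCompact_Icc.exists_bound_of_continuousOn hS₂
  obtain ⟨M₆, hM₆⟩ := isCompact_Icc.exists_bound_of_continuousOn hR₁₁
  obtain ⟨M₇, hM₇⟩ := isCompact_Icc.exists_bound_of_continuousOn hc₁
  obtain ⟨M₈, hM₈⟩ := isCompact_Icc.exists_bound_of_continuousOn hc₂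
  set M : ℝ := 1 + (|M₁| + |M₂| + |M₃| + |M₄| + |M₅| + |M₆| + |M₇| + |M₈|) with hMdef
  have habs : ∀ i : Fin 8, True := fun _ => trivial
  have hM1 : 1 ≤ M := by
    have := abs_nonneg M₁; have := abs_nonneg M₂; have := abs_nonneg M₃
    have := abs_nonneg M₄; have := abs_nonneg M₅; have := abs_nonneg M₆
    have := abs_nonneg M₇; have := abs_nonneg M₈
    simp only [hMdef]; linarith
  have hAbnd : ∀ t ∈ Set.Icc 0 T, ‖A t‖ ≤ M := by
    intro t ht
    have := le_abs_self M₁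
    have := abs_nonneg M₂; have := abs_nonneg M₃; have := abs_nonneg M₄
    have := abs_nonneg M₅; have := abs_nonneg M₆; have := abs_nonneg M₇
    have := abs_nonneg M₈
    have h := hM₁ t ht; simp only [hMdef]; linarith
  have hBbnd : ∀ t ∈ Set.Icc 0 T, ‖B t‖ ≤ M := by
    intro t ht
    have := le_abs_self M₂
    have := abs_nonneg M₁; have := abs_nonneg M₃; have := abs_nonneg M₄
    have := abs_nonneg M₅; have := abs_nonneg M₆; have := abs_nonneg M₇
    have := abs_nonneg M₈
    have h := hM₂ t ht; simp only [hMdef]; linarith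
  have hCbnd : ∀ t ∈ Set.Icc 0 T, ‖C t‖ ≤ M := by
    intro t ht
    have := le_abs_self M₃
    have := abs_nonneg M₁; have := abs_nonneg M₂; have := abs_nonneg M₄
    have := abs_nonneg M₅; have := abs_nonneg M₆; have := abs_nonneg M₇
    have := abs_nonneg M₈
    have h := hM₃ t ht; simp only [hMdef]; linarith
  have hS₁bnd : ∀ t ∈ Set.Icc 0 T, ‖S₁ t‖ ≤ M := by
    intro t ht
    have := le_abs_self M₄
    have := abs_nonneg M₁; have := abs_nonneg M₂; have := abs_nonneg M₃
    have := abs_nonneg M₅; have := abs_nonneg M₆; have := abs_nonneg M₇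
    have := abs_nonneg M₈
    have h := hM₄ t ht; simp only [hMdef]; linarith
  have hS₂bnd : ∀ t ∈ Set.Icc 0 T, ‖S₂ t‖ ≤ M := by
    intro t ht
    have := le_abs_self M₅
    have := abs_nonneg M₁; have := abs_nonneg M₂; have := abs_nonneg M₃
    have := abs_nonneg M₄; have := abs_nonneg M₆; have := abs_nonneg M₇
    have := abs_nonneg M₈
    have h := hM₅ t ht; simp only [hMdef]; linarith
  have hRbnd : ∀ t ∈ Set.Icc 0 T, ‖R₁₁ t‖ ≤ M := by
    intro t ht
    have := le_abs_self M₆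
    have := abs_nonneg M₁; have := abs_nonneg M₂; have := abs_nonneg M₃
    have := abs_nonneg M₄; have := abs_nonneg M₅; have := abs_nonneg M₇
    have := abs_nonneg M₈
    have h := hM₆ t ht; simp only [hMdef]; linarith
  have hY₁bnd : ∀ t ∈ Set.Icc 0 T, ‖Υ₁ t‖ ≤ M := by
    intro t ht
    have := le_abs_self M₇
    have := abs_nonneg M₁; have := abs_nonneg M₂; have := abs_nonneg M₃
    have := abs_nonneg M₄; have := abs_nonneg M₅; have := abs_nonneg M₆
    have := abs_nonneg M₈
    have h := hM₇ t ht; simp only [hMdef]; linarith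
  have hY₂bnd : ∀ t ∈ Set.Icc 0 T, ‖Υ₂ t‖ ≤ M := by
    intro t ht
    have := le_abs_self M₈
    have := abs_nonneg M₁; have := abs_nonneg M₂; have := abs_nonneg M₃
    have := abs_nonneg M₄; have := abs_nonneg M₅; have := abs_nonneg M₆
    have := abs_nonneg M₇
    have h := hM₈ t ht; simp only [hMdef]; linarith
  set K₁ : ℝ := max K 1 with hK₁def
  have hK₁1 : 1 ≤ K₁ := le_max_right _ _
  set L : ℝ := 2 * M + 8 * K₁ * M ^ 4 + 4 * K₁ ^ 2 * M ^ 6 + 4 * K₁ * M ^ 3 with hLdef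
  set F₁ : ℝ → Matrix (Fin n) (Fin n) ℝ := fun t =>
    Υ₁ t * (A t)ᵀ + A t * Υ₁ t
      - (C t + Υ₁ t * S₁ t) * (1 + Υ₁ t * R₁₁ t)⁻¹ * Υ₁ t * ((C t)ᵀ + (S₁ t)ᵀ * Υ₁ t)
      - (B t + Υ₁ t * S₂ t) * (R₂₂ t)⁻¹ * ((B t)ᵀ + (S₂ t)ᵀ * Υ₁ t) with hF₁def
  set F₂ : ℝ → Matrix (Fin n) (Fin n) ℝ := fun t =>
    Υ₂ t * (A t)ᵀ + A t * Υ₂ t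
      - (C t + Υ₂ t * S₁ t) * (1 + Υ₂ t * R₁₁ t)⁻¹ * Υ₂ t * ((C t)ᵀ + (S₁ t)ᵀ * Υ₂ t)
      - (B t + Υ₂ t * S₂ t) * (R₂₂ t)⁻¹ * ((B t)ᵀ + (S₂ t)ᵀ * Υ₂ t) with hF₂def
  have hmap : Set.MapsTo (fun s : ℝ => T - s) (Set.Icc 0 T) (Set.Icc 0 T) := by
    intro s hs
    simp only [Set.mem_Icc] at hs ⊢
    constructor <;> linarith [hs.1, hs.2]
  set g : ℝ → Matrix (Fin n) (Fin n) ℝ := fun s => Υ₁ (T - s) - Υ₂ (T - s) with hgdef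
  set g' : ℝ → Matrix (Fin n) (Fin n) ℝ := fun s =>
    (-1 : ℝ) • (F₁ (T - s) - F₂ (T - s)) with hg'def
  have hgc : ContinuousOn g (Set.Icc 0 T) :=
    (hc₁.sub hc₂).comp (continuous_const.sub continuous_id).continuousOn hmap
  have hgderiv : ∀ s ∈ Set.Ico 0 T, HasDerivWithinAt g (g' s) (Set.Ici s) s := by
    intro s hs
    have hts : T - s ∈ Set.Icc 0 T := hmap ⟨hs.1, hs.2.le⟩
    have hΔ : HasDerivWithinAt (fun u => Υ₁ u - Υ₂ u) (F₁ (T - s) - F₂ (T - s))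
        (Set.Icc 0 T) (T - s) := (hΥ₁ode _ hts).sub (hΥ₂ode _ hts)
    have hσ : HasDerivWithinAt (fun u : ℝ => T - u) (-1 : ℝ) (Set.Icc 0 T) s := by
      simpa using (hasDerivWithinAt_id s (Set.Icc 0 T)).const_sub T
    have hcomp := hΔ.scomp s hσ hmap
    exact hcomp.mono_of_mem_nhdsWithin (Icc_mem_nhdsGE_of_mem hs)
  have hbound : ∀ s ∈ Set.Ico 0 T, ‖g' s‖ ≤ L * ‖g s‖ + 0 := by
    intro s hs
    have hts : T - s ∈ Set.Icc 0 T := hmap ⟨hs.1, hs.2.le⟩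
    set t := T - s
    have hU₁ : (1 + Υ₁ t * R₁₁ t)⁻¹ * (1 + Υ₁ t * R₁₁ t) = 1 :=
      Matrix.nonsing_inv_mul _ ((Matrix.isUnit_iff_isUnit_det _).mp (hΥ₁inv t hts).1)
    have hU₂ : (1 + Υ₂ t * R₁₁ t) * (1 + Υ₂ t * R₁₁ t)⁻¹ = 1 :=
      Matrix.mul_nonsing_inv _ ((Matrix.isUnit_iff_isUnit_det _).mp (hΥ₂inv t hts).1)
    have hlip := riccati_lip (A t) (C t) (S₁ t) (R₁₁ t) (Υ₁ t) (Υ₂ t) (B t) (S₂ t) (R₂₂ t)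
      M K₁ hM1 hK₁1 (hAbnd t hts) (hBbnd t hts) (hCbnd t hts) (hS₁bnd t hts) (hS₂bnd t hts)
      (hRbnd t hts) (hY₁bnd t hts) (hY₂bnd t hts)
      ((hR₂₂inv t hts).2.trans (le_max_left _ _))
      ((hΥ₁inv t hts).2.trans (le_max_left _ _))
      ((hΥ₂inv t hts).2.trans (le_max_left _ _)) hU₁ hU₂
    have hnorm : ‖g' s‖ = ‖F₁ t - F₂ t‖ := by
      have : g' s = (-1 : ℝ) • (F₁ t - F₂ t) := rfl
      rw [this, norm_smul]
      simp
    rw [hnorm, add_zero]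
    exact hlip
  have h0 : ‖g 0‖ ≤ 0 := by simp [hgdef, hterm]
  have hgron := norm_le_gronwallBound_of_norm_deriv_right_le hgc hgderiv h0 hbound
  intro t ht
  have hx : T - t ∈ Set.Icc 0 T := hmap ht
  have hle := hgron (T - t) hx
  rw [gronwallBound_ε0_δ0] at hle
  have hz : Υ₁ (T - (T - t)) - Υ₂ (T - (T - t)) = 0 := norm_le_zero_iff.mp hle
  rw [sub_sub_cancel] at hz
  exact sub_eq_zero.mp hz
end

section
/- Let T > 0 and let A, Q : [0,T] → ℝ^{n×n} be continuous with Q(s) symmetric positive semidefinite for every s ∈ [0,T]. Let Π : [0,T] → Sym(n) be differentiable with Π'(t) + Π(t)A(t) + A(t)ᵀΠ(t) = Q(t) for all t ∈ [0,T], and suppose Π(0) is positive semidefinite. Then Π(t) is positive semidefinite for every t ∈ [0,T]. -/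
open Matrix Metric Set Filter
open scoped Matrix.Norms.L2Operator RealInnerProductSpace Topology

set_option maxHeartbeats 1000000

section LyapunovAux
variable {n : ℕ}



lemma symm_herm {M : Matrix (Fin n) (Fin n) ℝ} (h : M.IsSymm) : M.IsHermitian := by
  rw [Matrix.IsHermitian]
  have h2 : Mᴴ = Mᵀ := by ext i j; simp [Matrix.conjTranspose_apply]
  rw [h2]; exact h

lemma sa_of_symm (M : Matrix (Fin n) (Fin n) ℝ) (h : M.IsSymm) :
    _root_.IsSelfAdjoint (toEuclideanCLM (𝕜 := ℝ) M) := by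
  have hst : star (toEuclideanCLM (𝕜 := ℝ) M) = toEuclideanCLM (𝕜 := ℝ) (star M) := (map_star _ _).symm
  rw [_root_.IsSelfAdjoint, hst]
  exact congrArg _ (by rw [Matrix.star_eq_conjTranspose]; exact symm_herm h)

lemma transpose_clm (M : Matrix (Fin n) (Fin n) ℝ) :
    toEuclideanCLM (𝕜 := ℝ) Mᵀ = ContinuousLinearMap.adjoint (toEuclideanCLM (𝕜 := ℝ) M) := by
  have h2 : Mᵀ = star M := by
    rw [Matrix.star_eq_conjTranspose]; ext i j; simp [Matrix.conjTranspose_apply]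
  rw [h2, map_star]
  rfl

noncomputable def qf (M : Matrix (Fin n) (Fin n) ℝ) : ℝ :=
  sSup ((fun x : EuclideanSpace ℝ (Fin n) => ⟪x, toEuclideanCLM (𝕜 := ℝ) M x⟫) '' sphere 0 1)

lemma qf_abs_le (M : Matrix (Fin n) (Fin n) ℝ) {x : EuclideanSpace ℝ (Fin n)}
    (hx : x ∈ sphere (0 : EuclideanSpace ℝ (Fin n)) 1) :
    |⟪x, toEuclideanCLM (𝕜 := ℝ) M x⟫| ≤ ‖M‖ := by
  rw [mem_sphere_zero_iff_norm] at hx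
  calc |⟪x, toEuclideanCLM (𝕜 := ℝ) M x⟫| ≤ ‖x‖ * ‖toEuclideanCLM (𝕜 := ℝ) M x‖ :=
        abs_real_inner_le_norm _ _
    _ ≤ ‖x‖ * (‖toEuclideanCLM (𝕜 := ℝ) M‖ * ‖x‖) := by
        gcongr; exact (toEuclideanCLM (𝕜 := ℝ) M).le_opNorm x
    _ = ‖M‖ := by rw [hx, ← Matrix.cstar_norm_def]; ring

lemma qf_bdd (M : Matrix (Fin n) (Fin n) ℝ) :
    BddAbove ((fun x : EuclideanSpace ℝ (Fin n) => ⟪x, toEuclideanCLM (𝕜 := ℝ) M x⟫) '' sphere 0 1) := by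
  refine ⟨‖M‖, ?_⟩
  rintro _ ⟨x, hx, rfl⟩
  exact (abs_le.1 (qf_abs_le M hx)).2

variable [NeZero n]

lemma sphere_ne : (sphere (0 : EuclideanSpace ℝ (Fin n)) 1).Nonempty := by
  refine ⟨EuclideanSpace.single ⟨0, Nat.pos_of_ne_zero (NeZero.ne n)⟩ 1, ?_⟩
  rw [mem_sphere_zero_iff_norm, EuclideanSpace.norm_single]
  norm_num

lemma le_qf (M : Matrix (Fin n) (Fin n) ℝ) {x : EuclideanSpace ℝ (Fin n)}
    (hx : x ∈ sphere (0 : EuclideanSpace ℝ (Fin n)) 1) :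
    ⟪x, toEuclideanCLM (𝕜 := ℝ) M x⟫ ≤ qf M :=
  le_csSup (qf_bdd M) ⟨x, hx, rfl⟩

lemma qf_le (M : Matrix (Fin n) (Fin n) ℝ) {c : ℝ}
    (h : ∀ x ∈ sphere (0 : EuclideanSpace ℝ (Fin n)) 1, ⟪x, toEuclideanCLM (𝕜 := ℝ) M x⟫ ≤ c) :
    qf M ≤ c :=
  csSup_le (sphere_ne.image _) (by rintro _ ⟨x, hx, rfl⟩; exact h x hx)

lemma qf_exists_max (M : Matrix (Fin n) (Fin n) ℝ) :
    ∃ x ∈ sphere (0 : EuclideanSpace ℝ (Fin n)) 1,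
      qf M = ⟪x, toEuclideanCLM (𝕜 := ℝ) M x⟫ ∧
      ∀ y ∈ sphere (0 : EuclideanSpace ℝ (Fin n)) 1,
        ⟪y, toEuclideanCLM (𝕜 := ℝ) M y⟫ ≤ ⟪x, toEuclideanCLM (𝕜 := ℝ) M x⟫ := by
  have hc : ContinuousOn (fun x : EuclideanSpace ℝ (Fin n) => ⟪x, toEuclideanCLM (𝕜 := ℝ) M x⟫)
      (sphere 0 1) :=
    (continuous_id.inner ((toEuclideanCLM (𝕜 := ℝ) M).continuous)).continuousOn
  obtain ⟨x, hxS, hmax⟩ := (isCompact_sphere (0 : EuclideanSpace ℝ (Fin n)) 1).exists_isMaxOn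
    sphere_ne hc
  refine ⟨x, hxS, ?_, fun y hy => hmax hy⟩
  exact (IsGreatest.csSup_eq ⟨⟨x, hxS, rfl⟩, by rintro _ ⟨y, hy, rfl⟩; exact hmax hy⟩)

lemma qf_sub_le (M M' : Matrix (Fin n) (Fin n) ℝ) : qf M - qf M' ≤ ‖M - M'‖ := by
  rw [sub_le_iff_le_add]
  refine qf_le M fun x hx => ?_
  have h1 : toEuclideanCLM (𝕜 := ℝ) M x =
      toEuclideanCLM (𝕜 := ℝ) (M - M') x + toEuclideanCLM (𝕜 := ℝ) M' x := by
    rw [map_sub]; simp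
  rw [h1, inner_add_right]
  have := (abs_le.1 (qf_abs_le (M - M') hx)).2
  have := le_qf M' hx
  linarith

lemma qf_lipschitz : LipschitzWith 1 (qf (n := n)) := by
  refine LipschitzWith.of_dist_le_mul fun M M' => ?_
  rw [NNReal.coe_one, one_mul, Real.dist_eq, dist_eq_norm]
  rw [abs_sub_le_iff]
  constructor
  · exact qf_sub_le M M'
  · rw [← norm_neg]; simpa using qf_sub_le M' M

lemma qf_eigen {M : Matrix (Fin n) (Fin n) ℝ} (hM : M.IsSymm)
    {x₀ : EuclideanSpace ℝ (Fin n)} (hx₀ : x₀ ∈ sphere (0 : EuclideanSpace ℝ (Fin n)) 1)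
    (hmax : ∀ y ∈ sphere (0 : EuclideanSpace ℝ (Fin n)) 1,
      ⟪y, toEuclideanCLM (𝕜 := ℝ) M y⟫ ≤ ⟪x₀, toEuclideanCLM (𝕜 := ℝ) M x₀⟫) :
    toEuclideanCLM (𝕜 := ℝ) M x₀ = ⟪x₀, toEuclideanCLM (𝕜 := ℝ) M x₀⟫ • x₀ := by
  set T := toEuclideanCLM (𝕜 := ℝ) M with hT
  have hsa : _root_.IsSelfAdjoint T := sa_of_symm M hM
  have hnorm : ‖x₀‖ = 1 := mem_sphere_zero_iff_norm.1 hx₀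
  have happ : ∀ y : EuclideanSpace ℝ (Fin n), T.reApplyInnerSelf y = ⟪y, T y⟫ := by
    intro y
    rw [ContinuousLinearMap.reApplyInnerSelf, real_inner_comm]
    rfl
  have hextr : IsMaxOn T.reApplyInnerSelf (sphere (0 : EuclideanSpace ℝ (Fin n)) ‖x₀‖) x₀ := by
    rw [hnorm]
    intro y hy
    simp only [Set.mem_setOf_eq, happ]
    exact hmax y hy
  have h1 := hsa.eq_smul_self_of_isLocalExtrOn_real (Or.inr hextr.localize)
  have h2 : T.rayleighQuotient x₀ = ⟪x₀, T x₀⟫ := by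
    simp only [ContinuousLinearMap.rayleighQuotient, happ, hnorm]
    norm_num
  exact h1.trans (by rw [h2])

end LyapunovAux

open Matrix
open scoped Matrix.Norms.L2Operator

/-- If `Π' + ΠA + AᵀΠ = Q` on `[0,T]` with `Q(s)` symmetric positive
semidefinite, `Π` symmetric-valued, and `Π(0)` positive semidefinite, then `Π(t)` is
positive semidefinite for every `t ∈ [0,T]`. -/
theorem lyapunov_posSemidef_propagation {n : ℕ} {T : ℝ} (hT : 0 < T)
    (A Q : ℝ → Matrix (Fin n) (Fin n) ℝ)
    (hA : ContinuousOn A (Set.Icc 0 T)) (hQ : ContinuousOn Q (Set.Icc 0 T))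
    (hQpsd : ∀ s ∈ Set.Icc 0 T, (Q s).PosSemidef)
    (P : ℝ → Matrix (Fin n) (Fin n) ℝ)
    (hPsymm : ∀ t ∈ Set.Icc 0 T, (P t).IsSymm)
    (hPode : ∀ t ∈ Set.Icc 0 T,
      HasDerivWithinAt P (Q t - P t * A t - (A t)ᵀ * P t) (Set.Icc 0 T) t)
    (hP0 : (P 0).PosSemidef) :
    ∀ t ∈ Set.Icc 0 T, (P t).PosSemidef := by
  have hherm : ∀ t ∈ Set.Icc 0 T, (P t).IsHermitian := fun t ht => symm_herm (hPsymm t ht)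
  rcases Nat.eq_zero_or_pos n with hn | hn
  · subst hn
    intro t ht
    refine ⟨hherm t ht, fun x => ?_⟩
    have hx : x = 0 := Subsingleton.elim _ _
    simp [hx]
  haveI : NeZero n := ⟨hn.ne'⟩
  -- continuity of P and bound on A
  have hPcont : ContinuousOn P (Set.Icc 0 T) := fun s hs => (hPode s hs).continuousWithinAt
  obtain ⟨K, hK0, hK⟩ : ∃ K, 0 ≤ K ∧ ∀ s ∈ Set.Icc 0 T, ‖A s‖ ≤ K := by
    obtain ⟨C, hC⟩ := (isCompact_Icc (a := (0:ℝ)) (b := T)).exists_bound_of_continuousOn hA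
    exact ⟨max C 0, le_max_right _ _, fun s hs => (hC s hs).trans (le_max_left _ _)⟩
  set g : ℝ → ℝ := fun t => qf (-(P t)) with hg
  have hgcont : ContinuousOn g (Set.Icc 0 T) :=
    qf_lipschitz.continuous.comp_continuousOn hPcont.neg
  -- the key Dini-derivative estimate
  have key : ∀ t ∈ Set.Ico 0 T, ∀ r, 2*K*(max (g t) 0) < r →
      ∀ᶠ z in 𝓝[>] t, (z - t)⁻¹ * (max (g z) 0 - max (g t) 0) < r := by
    intro t ht r hr
    obtain ⟨ht0, htT⟩ := ht
    have htmem : t ∈ Set.Icc 0 T := ⟨ht0, htT.le⟩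
    have hr0 : 0 < r := lt_of_le_of_lt (by positivity) hr
    have hfilter : 𝓝[>] t ≤ 𝓝[Set.Icc 0 T \ {t}] t := by
      rw [← nhdsWithin_Ioo_eq_nhdsGT htT]
      exact nhdsWithin_mono _ fun z hz => ⟨⟨ht0.trans hz.1.le, hz.2.le⟩, ne_of_gt hz.1⟩
    have hgt : Filter.Tendsto g (𝓝[>] t) (𝓝 (g t)) :=
      (hgcont t htmem).mono_left (hfilter.trans (nhdsWithin_mono _ Set.diff_subset))
    by_cases hneg : g t < 0
    · have hev : ∀ᶠ z in 𝓝[>] t, g z < 0 := hgt (Iio_mem_nhds hneg)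
      filter_upwards [hev] with z hz
      rw [max_eq_right hz.le, max_eq_right hneg.le]
      simpa using hr0
    · push_neg at hneg
      have hFt : max (g t) 0 = g t := max_eq_left hneg
      set D := Q t - P t * A t - (A t)ᵀ * P t with hD
      have hslope : Filter.Tendsto (slope P t) (𝓝[>] t) (𝓝 D) :=
        (hasDerivWithinAt_iff_tendsto_slope.mp (hPode t htmem)).mono_left hfilter
      have herr : Filter.Tendsto (fun z => ‖D - slope P t z‖) (𝓝[>] t) (𝓝 0) := by
        have h0 := (tendsto_const_nhds (x := D) (f := 𝓝[>] t)).sub hslope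
        simpa using h0.norm
      have hPz : Filter.Tendsto (fun z => ‖P t - P z‖) (𝓝[>] t) (𝓝 0) := by
        have h1 : Filter.Tendsto P (𝓝[>] t) (𝓝 (P t)) :=
          (hPcont t htmem).mono_left (hfilter.trans (nhdsWithin_mono _ Set.diff_subset))
        have h0 := (tendsto_const_nhds (x := P t) (f := 𝓝[>] t)).sub h1
        simpa using h0.norm
      have habs : Filter.Tendsto (fun z => |g z|) (𝓝[>] t) (𝓝 |g t|) := hgt.abs
      have hB : Filter.Tendsto (fun z => ‖D - slope P t z‖ + 2*((‖P t - P z‖ + |g z|)*K))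
          (𝓝[>] t) (𝓝 (0 + 2*((0 + |g t|)*K))) :=
        herr.add (((hPz.add habs).mul_const K).const_mul 2)
      have hlim : 0 + 2*((0 + |g t|)*K) = 2*K*(max (g t) 0) := by
        rw [hFt, abs_of_nonneg hneg]; ring
      have hevB : ∀ᶠ z in 𝓝[>] t, ‖D - slope P t z‖ + 2*((‖P t - P z‖ + |g z|)*K) < r :=
        hB (Iio_mem_nhds (by rw [hlim]; exact hr))
      have hIoo : ∀ᶠ z in 𝓝[>] t, z ∈ Set.Ioo t T :=
        Ioo_mem_nhdsGT_of_mem ⟨le_refl t, htT⟩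
      filter_upwards [hevB, hIoo] with z hBz hzIoo
      have hzt : 0 < z - t := sub_pos.2 hzIoo.1
      have hzmem : z ∈ Set.Icc 0 T := ⟨ht0.trans hzIoo.1.le, hzIoo.2.le⟩
      obtain ⟨y, hyS, hyeq, hymax⟩ := qf_exists_max (-(P z))
      have hy1 : ‖y‖ = 1 := mem_sphere_zero_iff_norm.1 hyS
      -- step 1 : g z - g t ≤ ⟪y, L (P t - P z) y⟫
      have h1 : g z - g t ≤ ⟪y, toEuclideanCLM (𝕜 := ℝ) (P t - P z) y⟫ := by
        have hle : ⟪y, toEuclideanCLM (𝕜 := ℝ) (-(P t)) y⟫ ≤ g t := le_qf _ hyS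
        have hsplit : toEuclideanCLM (𝕜 := ℝ) (P t - P z) y =
            toEuclideanCLM (𝕜 := ℝ) (-(P z)) y - toEuclideanCLM (𝕜 := ℝ) (-(P t)) y := by
          rw [← ContinuousLinearMap.sub_apply, ← map_sub,
            show -(P z) - -(P t) = P t - P z from by abel]
        rw [hsplit, inner_sub_right]
        have hgz : g z = ⟪y, toEuclideanCLM (𝕜 := ℝ) (-(P z)) y⟫ := hyeq
        linarith
      -- step 2 : scaling
      have h2 : (z - t)⁻¹ * (g z - g t) ≤
          ⟪y, toEuclideanCLM (𝕜 := ℝ) ((z - t)⁻¹ • (P t - P z)) y⟫ := by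
        rw [_root_.map_smul, ContinuousLinearMap.smul_apply, real_inner_smul_right]
        exact mul_le_mul_of_nonneg_left h1 (inv_nonneg.2 hzt.le)
      -- step 3 : decomposition
      have h3 : (z - t)⁻¹ • (P t - P z) = -D + (D - slope P t z) := by
        rw [slope_def_module]
        module
      -- step 4 : the main quadratic estimate at time t with eigenvector y of -(P z)
      have heig : toEuclideanCLM (𝕜 := ℝ) (P z) y = -(g z • y) := by
        have hsym : (-(P z)).IsSymm := by
          show (-(P z))ᵀ = -(P z)
          rw [Matrix.transpose_neg]
          rw [show (P z)ᵀ = P z from hPsymm z hzmem]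
        have heq := qf_eigen hsym hyS hymax
        rw [← hyeq] at heq
        have hmn : toEuclideanCLM (𝕜 := ℝ) (-(P z)) y = -(toEuclideanCLM (𝕜 := ℝ) (P z) y) := by
          rw [map_neg, ContinuousLinearMap.neg_apply]
        rw [hmn] at heq
        exact neg_eq_iff_eq_neg.mp heq
      have hPty : ‖toEuclideanCLM (𝕜 := ℝ) (P t) y‖ ≤ ‖P t - P z‖ + |g z| := by
        have hsplit : toEuclideanCLM (𝕜 := ℝ) (P t) y =
            toEuclideanCLM (𝕜 := ℝ) (P t - P z) y + toEuclideanCLM (𝕜 := ℝ) (P z) y := by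
          rw [← ContinuousLinearMap.add_apply, ← map_add,
            show P t - P z + P z = P t from by abel]
        rw [hsplit, heig]
        refine (norm_add_le _ _).trans (add_le_add ?_ ?_)
        · calc ‖toEuclideanCLM (𝕜 := ℝ) (P t - P z) y‖
              ≤ ‖toEuclideanCLM (𝕜 := ℝ) (P t - P z)‖ * ‖y‖ := ContinuousLinearMap.le_opNorm _ _
            _ = ‖P t - P z‖ := by rw [hy1, ← Matrix.cstar_norm_def, mul_one]
        · rw [norm_neg, norm_smul, hy1, mul_one, Real.norm_eq_abs]
      have hAty : ‖toEuclideanCLM (𝕜 := ℝ) (A t) y‖ ≤ K := by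
        calc ‖toEuclideanCLM (𝕜 := ℝ) (A t) y‖
            ≤ ‖toEuclideanCLM (𝕜 := ℝ) (A t)‖ * ‖y‖ := ContinuousLinearMap.le_opNorm _ _
          _ = ‖A t‖ := by rw [hy1, ← Matrix.cstar_norm_def, mul_one]
          _ ≤ K := hK t htmem
      have hcross : ⟪y, toEuclideanCLM (𝕜 := ℝ) (-D) y⟫ ≤ 2*((‖P t - P z‖ + |g z|)*K) := by
        have hnegD : -D = (P t * A t + (A t)ᵀ * P t) - Q t := by rw [hD]; abel
        have hterm1 : ⟪y, toEuclideanCLM (𝕜 := ℝ) (P t * A t) y⟫ =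
            ⟪toEuclideanCLM (𝕜 := ℝ) (P t) y, toEuclideanCLM (𝕜 := ℝ) (A t) y⟫ := by
          rw [_root_.map_mul, ContinuousLinearMap.mul_apply]
          exact ((sa_of_symm (P t) (hPsymm t htmem)).isSymmetric _ _).symm
        have hterm2 : ⟪y, toEuclideanCLM (𝕜 := ℝ) ((A t)ᵀ * P t) y⟫ =
            ⟪toEuclideanCLM (𝕜 := ℝ) (P t) y, toEuclideanCLM (𝕜 := ℝ) (A t) y⟫ := by
          rw [_root_.map_mul, ContinuousLinearMap.mul_apply, transpose_clm,
            ContinuousLinearMap.adjoint_inner_right]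
          exact real_inner_comm _ _
        have hterm3 : 0 ≤ ⟪y, toEuclideanCLM (𝕜 := ℝ) (Q t) y⟫ := by
          have := (hQpsd t htmem).dotProduct_mulVec_nonneg (WithLp.equiv 2 (Fin n → ℝ) y)
          rw [EuclideanSpace.inner_eq_star_dotProduct, dotProduct_comm]
          exact this
        have hbound : ⟪toEuclideanCLM (𝕜 := ℝ) (P t) y, toEuclideanCLM (𝕜 := ℝ) (A t) y⟫ ≤
            (‖P t - P z‖ + |g z|) * K := by
          calc ⟪toEuclideanCLM (𝕜 := ℝ) (P t) y, toEuclideanCLM (𝕜 := ℝ) (A t) y⟫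
              ≤ ‖toEuclideanCLM (𝕜 := ℝ) (P t) y‖ * ‖toEuclideanCLM (𝕜 := ℝ) (A t) y‖ :=
                real_inner_le_norm _ _
            _ ≤ (‖P t - P z‖ + |g z|) * K := by
                apply mul_le_mul hPty hAty (norm_nonneg _)
                positivity
        rw [hnegD, map_sub, _root_.map_add, ContinuousLinearMap.sub_apply,
          ContinuousLinearMap.add_apply, inner_sub_right, inner_add_right, hterm1, hterm2]
        linarith
      have hsmall : ⟪y, toEuclideanCLM (𝕜 := ℝ) (D - slope P t z) y⟫ ≤ ‖D - slope P t z‖ :=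
        (abs_le.1 (qf_abs_le _ hyS)).2
      have hq : (z - t)⁻¹ * (g z - g t) < r := by
        calc (z - t)⁻¹ * (g z - g t)
            ≤ ⟪y, toEuclideanCLM (𝕜 := ℝ) ((z - t)⁻¹ • (P t - P z)) y⟫ := h2
          _ = ⟪y, toEuclideanCLM (𝕜 := ℝ) (-D) y⟫ +
              ⟪y, toEuclideanCLM (𝕜 := ℝ) (D - slope P t z) y⟫ := by
              rw [h3, _root_.map_add, ContinuousLinearMap.add_apply, inner_add_right]
          _ ≤ 2*((‖P t - P z‖ + |g z|)*K) + ‖D - slope P t z‖ := add_le_add hcross hsmall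
          _ < r := by linarith
      -- conclude for F = max g 0
      have hstep : max (g z) 0 - max (g t) 0 ≤ max (g z - g t) 0 := by
        rw [hFt, sub_le_iff_le_add]
        exact max_le (by linarith [le_max_left (g z - g t) (0:ℝ)])
          (by linarith [le_max_right (g z - g t) (0:ℝ)])
      calc (z - t)⁻¹ * (max (g z) 0 - max (g t) 0)
          ≤ (z - t)⁻¹ * max (g z - g t) 0 :=
            mul_le_mul_of_nonneg_left hstep (inv_nonneg.2 hzt.le)
        _ = max ((z - t)⁻¹ * (g z - g t)) ((z - t)⁻¹ * 0) :=
            mul_max_of_nonneg _ _ (inv_nonneg.2 hzt.le)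
        _ < r := by rw [mul_zero]; exact max_lt hq hr0
  -- Grönwall
  have hFcont : ContinuousOn (fun t => max (g t) 0) (Set.Icc 0 T) :=
    fun x hx => (hgcont x hx).max continuousWithinAt_const
  have hF0 : max (g 0) 0 ≤ 0 := by
    have hg0 : g 0 ≤ 0 := by
      refine qf_le _ fun x hx => ?_
      have h0 : (0:ℝ) ≤ ⟪x, toEuclideanCLM (𝕜 := ℝ) (P 0) x⟫ := by
        have := hP0.dotProduct_mulVec_nonneg (WithLp.equiv 2 (Fin n → ℝ) x)
        rw [EuclideanSpace.inner_eq_star_dotProduct, dotProduct_comm]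
        exact this
      rw [map_neg, ContinuousLinearMap.neg_apply, inner_neg_right]
      linarith
    exact max_le hg0 le_rfl
  have hgron := le_gronwallBound_of_liminf_deriv_right_le (f := fun t => max (g t) 0)
    (f' := fun t => 2*K*(max (g t) 0)) (δ := 0) (K := 2*K) (ε := 0) (a := 0) (b := T)
    hFcont (fun x hx r hr => (key x hx r hr).frequently) hF0
    (fun x _ => by simp)
  have hgle : ∀ t ∈ Set.Icc 0 T, g t ≤ 0 := by
    intro t ht
    have h1 := hgron t ht
    rw [gronwallBound_ε0] at h1
    simp at h1
    exact h1
  -- conclusion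
  intro t ht
  refine .of_dotProduct_mulVec_nonneg (hherm t ht) fun x => ?_
  by_cases hx : x = 0
  · simp [hx]
  · set u : EuclideanSpace ℝ (Fin n) := (WithLp.equiv 2 (Fin n → ℝ)).symm x with hu
    have hu0 : u ≠ 0 := by
      intro h
      apply hx
      have := congrArg (WithLp.equiv 2 (Fin n → ℝ)) h
      simpa [hu] using this
    have hun : (0:ℝ) < ‖u‖ := norm_pos_iff.2 hu0
    set w : EuclideanSpace ℝ (Fin n) := ‖u‖⁻¹ • u with hw
    have hwS : w ∈ sphere (0 : EuclideanSpace ℝ (Fin n)) 1 := by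
      rw [mem_sphere_zero_iff_norm, hw, norm_smul, norm_inv, norm_norm,
        inv_mul_cancel₀ hun.ne']
    have hle : ⟪w, toEuclideanCLM (𝕜 := ℝ) (-(P t)) w⟫ ≤ 0 :=
      (le_qf _ hwS).trans (hgle t ht)
    have hexp : ⟪w, toEuclideanCLM (𝕜 := ℝ) (-(P t)) w⟫ =
        -((‖u‖⁻¹ * ‖u‖⁻¹) * ⟪u, toEuclideanCLM (𝕜 := ℝ) (P t) u⟫) := by
      rw [hw, map_neg, ContinuousLinearMap.neg_apply, inner_neg_right, _root_.map_smul,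
        real_inner_smul_left, real_inner_smul_right]
      ring
    have hpos : 0 ≤ ⟪u, toEuclideanCLM (𝕜 := ℝ) (P t) u⟫ := by
      rw [hexp] at hle
      nlinarith [mul_pos (inv_pos.2 hun) (inv_pos.2 hun)]
    have hfin : ⟪u, toEuclideanCLM (𝕜 := ℝ) (P t) u⟫ = star x ⬝ᵥ (P t) *ᵥ x := by
      rw [EuclideanSpace.inner_eq_star_dotProduct, dotProduct_comm]; rfl
    rw [hfin] at hpos
    exact hpos
end

section
/- Let T > 0 and let A : [0,T] → ℝ^{n×n}, 𝓑, S : [0,T] → ℝ^{n×k}, R : [0,T] → Sym(k) be continuous, and let 𝒟 ∈ ℝ^{n×k} be a fixed matrix. Suppose Π₁, Π₂ : [0,T] → Sym(n) are differentiable and for i = 1, 2 satisfy Πᵢ'(t) + Πᵢ(t)A(t) + A(t)ᵀΠᵢ(t) − (Πᵢ(t)𝓑(t)+S(t))(R(t)+𝒟ᵀΠᵢ(t)𝒟)⁻¹(Πᵢ(t)𝓑(t)+S(t))ᵀ = 0, with R(t)+𝒟ᵀΠᵢ(t)𝒟 positive definite for all t ∈ [0,T]. If Π₁(T) = λ₁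 I and Π₂(T) = λ₂ I with real numbers λ₂ > λ₁, then Π₂(t) − Π₁(t) is positive definite for every t ∈ [0,T]. -/
open Matrix Set
open scoped Matrix.Norms.L2Operator NNReal RealInnerProductSpace

noncomputable section RiccatiAux

/-- `mulVec` as a continuous linear map in both the matrix and the vector. -/
def matL (n : ℕ) : Matrix (Fin n) (Fin n) ℝ →L[ℝ]
    (EuclideanSpace ℝ (Fin n) →L[ℝ] EuclideanSpace ℝ (Fin n)) :=
  LinearMap.toContinuousLinearMap
  { toFun := fun A => LinearMap.toContinuousLinearMap
      { toFun := fun v => WithLp.toLp 2 (A *ᵥ (v : Fin n → ℝ))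
        map_add' := fun x y => by
          ext i; simp [Matrix.mulVec, dotProduct, PiLp.add_apply, mul_add,
            Finset.sum_add_distrib]
        map_smul' := fun c x => by
          ext i; simp [Matrix.mulVec, dotProduct, PiLp.smul_apply, Finset.mul_sum,
            mul_left_comm] }
    map_add' := fun A B => by ext v i; simp [Matrix.add_mulVec]
    map_smul' := fun c A => by ext v i; simp [Matrix.smul_mulVec] }

lemma norm_matL_apply_le {n : ℕ} (A : Matrix (Fin n) (Fin n) ℝ) (v : EuclideanSpace ℝ (Fin n)) :
    ‖matL n A v‖ ≤ ‖A‖ * ‖v‖ := by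
  exact Matrix.l2_opNorm_mulVec A v

lemma inner_eq_dot {n : ℕ} (u w : EuclideanSpace ℝ (Fin n)) :
    ⟪u, w⟫ = (u : Fin n → ℝ) ⬝ᵥ (w : Fin n → ℝ) := by
  simp [PiLp.inner_apply, dotProduct, mul_comm]

lemma matL_inner' {n : ℕ} (A : Matrix (Fin n) (Fin n) ℝ) (u w : EuclideanSpace ℝ (Fin n)) :
    ⟪matL n A u, w⟫ = (A *ᵥ (u : Fin n → ℝ)) ⬝ᵥ (w : Fin n → ℝ) := by
  rw [inner_eq_dot]; rfl

lemma matL_inner {n : ℕ} (A : Matrix (Fin n) (Fin n) ℝ) (v : EuclideanSpace ℝ (Fin n)) :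
    ⟪matL n A v, v⟫ = (A *ᵥ (v : Fin n → ℝ)) ⬝ᵥ (v : Fin n → ℝ) := matL_inner' A v v

lemma matL_apply {n : ℕ} (A : Matrix (Fin n) (Fin n) ℝ) (v : EuclideanSpace ℝ (Fin n)) :
    (matL n A v : Fin n → ℝ) = A *ᵥ (v : Fin n → ℝ) := rfl

lemma dotProduct_self_pos' {n : ℕ} {x : Fin n → ℝ} (hx : x ≠ 0) : 0 < x ⬝ᵥ x := by
  obtain ⟨i, hi⟩ := Function.ne_iff.mp hx
  apply Finset.sum_pos' (fun j _ => mul_self_nonneg (x j))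
  exact ⟨i, Finset.mem_univ i, mul_self_pos.mpr hi⟩

lemma contOn_mmul {X : Type*} [TopologicalSpace X] {a b c : ℕ}
    {f : X → Matrix (Fin a) (Fin b) ℝ} {g : X → Matrix (Fin b) (Fin c) ℝ} {s : Set X}
    (hf : ContinuousOn f s) (hg : ContinuousOn g s) :
    ContinuousOn (fun x => f x * g x) s :=
  (continuous_fst.matrix_mul continuous_snd).comp_continuousOn (hf.prodMk hg)

lemma contOn_transpose {X : Type*} [TopologicalSpace X] {a b : ℕ}
    {f : X → Matrix (Fin a) (Fin b) ℝ} {s : Set X} (hf : ContinuousOn f s) :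
    ContinuousOn (fun x => (f x)ᵀ) s :=
  (continuous_id.matrix_transpose).comp_continuousOn hf

lemma quad_cont {n : ℕ} (x : Fin n → ℝ) :
    Continuous fun Mm : Matrix (Fin n) (Fin n) ℝ => (Mm *ᵥ x) ⬝ᵥ x := by
  have h : (fun Mm : Matrix (Fin n) (Fin n) ℝ => (Mm *ᵥ x) ⬝ᵥ x)
      = fun Mm => ⟪matL n Mm ((WithLp.equiv 2 _).symm x), (WithLp.equiv 2 _).symm x⟫ :=
    funext fun Mm => (matL_inner' Mm _ _).symm
  rw [h]
  exact (((ContinuousLinearMap.apply ℝ _ ((WithLp.equiv 2 _).symm x)).comp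
    (matL n)).continuous).inner continuous_const

lemma dot_shift {n k : ℕ} (N : Matrix (Fin n) (Fin k) ℝ) (u : Fin k → ℝ) (x : Fin n → ℝ) :
    (N *ᵥ u) ⬝ᵥ x = u ⬝ᵥ (Nᵀ *ᵥ x) := by
  rw [dotProduct_comm, Matrix.dotProduct_mulVec, ← Matrix.mulVec_transpose]
  exact dotProduct_comm _ _

lemma quad_congr {n k : ℕ} (N : Matrix (Fin n) (Fin k) ℝ) (K : Matrix (Fin k) (Fin k) ℝ)
    (x : Fin n → ℝ) :
    ((N * K * Nᵀ) *ᵥ x) ⬝ᵥ x = (K *ᵥ (Nᵀ *ᵥ x)) ⬝ᵥ (Nᵀ *ᵥ x) := by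
  rw [← Matrix.mulVec_mulVec, ← Matrix.mulVec_mulVec, dot_shift]

variable {E : Type*} [NormedAddCommGroup E] [NormedSpace ℝ E]

/-- Glue two solutions of an ODE on adjacent intervals. -/
lemma glue_ode (v : ℝ → E → E) {a c d : ℝ} (hac : a ≤ c) (hcd : c ≤ d) {z w : ℝ → E}
    (hz : ∀ t ∈ Icc a c, HasDerivWithinAt z (v t (z t)) (Icc a c) t)
    (hw : ∀ t ∈ Icc c d, HasDerivWithinAt w (v t (w t)) (Icc c d) t)
    (hmatch : w c = z c) :
    ∃ u : ℝ → E, (∀ t ∈ Icc a c, u t = z t) ∧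
      ∀ t ∈ Icc a d, HasDerivWithinAt u (v t (u t)) (Icc a d) t := by
  classical
  set u : ℝ → E := fun t => if t ≤ c then z t else w t with hu
  have huz : ∀ t ∈ Icc a c, u t = z t := fun t ht => by simp [hu, ht.2]
  have huw : ∀ t ∈ Icc c d, u t = w t := by
    intro t ht
    rcases eq_or_lt_of_le ht.1 with h | h
    · simp [hu, ← h, hmatch]
    · simp [hu, not_le.2 h]
  refine ⟨u, huz, fun t ht => ?_⟩
  rcases lt_trichotomy t c with htc | htc | htc
  · have h1 : HasDerivWithinAt u (v t (u t)) (Icc a c) t := by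
      refine ((hz t ⟨ht.1, htc.le⟩).congr huz (huz t ⟨ht.1, htc.le⟩)).congr_deriv ?_
      rw [huz t ⟨ht.1, htc.le⟩]
    have hset : Icc a c = Icc a d ∩ Iic c := by
      ext s; simp only [mem_Icc, mem_inter_iff, mem_Iic]; constructor
      · exact fun h => ⟨⟨h.1, h.2.trans hcd⟩, h.2⟩
      · exact fun h => ⟨h.1.1, h.2⟩
    rw [hset] at h1
    exact (hasDerivWithinAt_inter (Iic_mem_nhds htc)).mp h1
  · subst htc
    have h1 : HasDerivWithinAt u (v t (u t)) (Icc a t) t := by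
      refine ((hz t ⟨ht.1, le_rfl⟩).congr huz (huz t ⟨ht.1, le_rfl⟩)).congr_deriv ?_
      rw [huz t ⟨ht.1, le_rfl⟩]
    have h2 : HasDerivWithinAt u (v t (u t)) (Icc t d) t := by
      refine ((hw t ⟨le_rfl, hcd⟩).congr huw (huw t ⟨le_rfl, hcd⟩)).congr_deriv ?_
      rw [huw t ⟨le_rfl, hcd⟩, hmatch, ← huz t ⟨ht.1, le_rfl⟩]
    have := h1.union h2
    rwa [Set.Icc_union_Icc_eq_Icc hac hcd] at this
  · have h1 : HasDerivWithinAt u (v t (u t)) (Icc c d) t := by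
      refine ((hw t ⟨htc.le, ht.2⟩).congr huw (huw t ⟨htc.le, ht.2⟩)).congr_deriv ?_
      rw [huw t ⟨htc.le, ht.2⟩]
    have hset : Icc c d = Icc a d ∩ Ici c := by
      ext s; simp only [mem_Icc, mem_inter_iff, mem_Ici]; constructor
      · exact fun h => ⟨⟨hac.trans h.1, h.2⟩, h.1⟩
      · exact fun h => ⟨h.2, h.1.2⟩
    rw [hset] at h1
    exact (hasDerivWithinAt_inter (Ici_mem_nhds htc)).mp h1

/-- Local existence for the linear ODE `z' = M t * z`, with a step size independent of the
initial value. -/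
lemma local_linear_ode {n : ℕ} {a b : ℝ} (M : ℝ → Matrix (Fin n) (Fin n) ℝ)
    (hM : ContinuousOn M (Icc a b)) {L : ℝ} (hL : 0 < L)
    (hbd : ∀ t ∈ Icc a b, ‖M t‖ ≤ L) {t₀ : ℝ} (ht₀ : t₀ ∈ Icc a b)
    (x : EuclideanSpace ℝ (Fin n)) :
    ∃ w : ℝ → EuclideanSpace ℝ (Fin n), w t₀ = x ∧
      ∀ t ∈ Icc t₀ (min b (t₀ + 1 / (2 * L))),
        HasDerivWithinAt w (matL n (M t) (w t)) (Icc t₀ (min b (t₀ + 1 / (2 * L)))) t := by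
  set δ : ℝ := 1 / (2 * L) with hδ
  have hδ0 : 0 < δ := by positivity
  set d : ℝ := min b (t₀ + δ) with hd
  have ht₀d : t₀ ≤ d := le_min ht₀.2 (by linarith)
  have hsub : Icc t₀ d ⊆ Icc a b := fun s hs => ⟨ht₀.1.trans hs.1, hs.2.trans (min_le_left _ _)⟩
  have hpl : IsPicardLindelof (fun t y => matL n (M t) y) (tmin := t₀) (tmax := d)
      ⟨t₀, le_rfl, ht₀d⟩ x (‖x‖ + 1).toNNReal 0 (L * (2 * ‖x‖ + 1)).toNNReal L.toNNReal := by
    have ha : ((‖x‖ + 1).toNNReal : ℝ) = ‖x‖ + 1 := Real.coe_toNNReal _ (by positivity)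
    have hC : ((L * (2 * ‖x‖ + 1)).toNNReal : ℝ) = L * (2 * ‖x‖ + 1) :=
      Real.coe_toNNReal _ (by positivity)
    constructor
    · intro t ht
      apply LipschitzWith.lipschitzOnWith
      apply LipschitzWith.of_dist_le_mul
      intro y y'
      rw [dist_eq_norm, dist_eq_norm, ← map_sub]
      calc ‖matL n (M t) (y - y')‖ ≤ ‖M t‖ * ‖y - y'‖ := norm_matL_apply_le _ _
        _ ≤ L * ‖y - y'‖ := by
            nlinarith [hbd t (hsub ht), norm_nonneg (y - y')]
        _ = ↑L.toNNReal * ‖y - y'‖ := by rw [Real.coe_toNNReal _ hL.le]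
    · intro y _
      have : Continuous fun A : Matrix (Fin n) (Fin n) ℝ => matL n A y :=
        ((ContinuousLinearMap.apply ℝ _ y).comp (matL n)).continuous
      exact this.comp_continuousOn (hM.mono hsub)
    · intro t ht y hy
      rw [hC]
      rw [mem_closedBall_iff_norm, ha] at hy
      calc ‖matL n (M t) y‖ ≤ ‖M t‖ * ‖y‖ := norm_matL_apply_le _ _
        _ ≤ L * (2 * ‖x‖ + 1) := by
            have h1 : ‖M t‖ ≤ L := hbd t (hsub ht)
            have h2 : ‖y‖ ≤ ‖x‖ + (‖x‖ + 1) := by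
              calc ‖y‖ ≤ ‖x‖ + ‖y - x‖ := by
                    have := norm_sub_norm_le y x; linarith
                _ ≤ ‖x‖ + (‖x‖ + 1) := by linarith [hy]
            nlinarith [norm_nonneg (M t), norm_nonneg y]
    · rw [hC, NNReal.coe_zero, sub_zero, ha]
      show L * (2 * ‖x‖ + 1) * max (d - t₀) (t₀ - t₀) ≤ ‖x‖ + 1
      have hmax : max (d - t₀) (t₀ - t₀) ≤ δ := by
        apply max_le _ (by linarith)
        have : d ≤ t₀ + δ := min_le_right _ _
        linarith
      calc L * (2 * ‖x‖ + 1) * max (d - t₀) (t₀ - t₀) ≤ L * (2 * ‖x‖ + 1) * δ := by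
            apply mul_le_mul_of_nonneg_left hmax (by positivity)
        _ = (2 * ‖x‖ + 1) / 2 := by field_simp [hδ]; rw [hδ]; field_simp
        _ ≤ ‖x‖ + 1 := by linarith
  obtain ⟨w, hw0, hw⟩ := hpl.exists_eq_forall_mem_Icc_hasDerivWithinAt₀
  exact ⟨w, hw0, hw⟩

/-- Global existence for the linear ODE `z' = M t * z` on a compact interval. -/
lemma global_linear_ode {n : ℕ} {a b : ℝ} (hab : a ≤ b) (M : ℝ → Matrix (Fin n) (Fin n) ℝ)
    (hM : ContinuousOn M (Icc a b)) (x₀ : EuclideanSpace ℝ (Fin n)) :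
    ∃ z : ℝ → EuclideanSpace ℝ (Fin n), z a = x₀ ∧
      ∀ t ∈ Icc a b, HasDerivWithinAt z (matL n (M t) (z t)) (Icc a b) t := by
  obtain ⟨L₀, hL₀⟩ := (isCompact_Icc.image_of_continuousOn (hM.norm)).bddAbove
  simp only [mem_upperBounds, Set.mem_image, forall_exists_index, and_imp] at hL₀
  set L : ℝ := max L₀ 1 with hLdef
  have hL : 0 < L := lt_of_lt_of_le one_pos (le_max_right _ _)
  have hbd : ∀ t ∈ Icc a b, ‖M t‖ ≤ L := fun t ht =>
    le_trans (hL₀ _ t ht rfl) (le_max_left _ _)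
  set δ : ℝ := 1 / (2 * L) with hδ
  have hδ0 : 0 < δ := by positivity
  have key : ∀ k : ℕ, ∃ z : ℝ → EuclideanSpace ℝ (Fin n), z a = x₀ ∧
      ∀ t ∈ Icc a (min b (a + k * δ)),
        HasDerivWithinAt z (matL n (M t) (z t)) (Icc a (min b (a + k * δ))) t := by
    intro k
    induction k with
    | zero =>
      refine ⟨fun _ => x₀, rfl, ?_⟩
      intro t ht
      simp only [Nat.cast_zero, zero_mul, add_zero, min_eq_right hab] at ht ⊢
      rw [Set.Icc_self] at ht ⊢
      rw [mem_singleton_iff] at ht; subst ht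
      rw [HasDerivWithinAt, hasDerivAtFilter_iff_isLittleO, nhdsWithin_singleton]
      simp [Asymptotics.isLittleO_pure]
    | succ k ih =>
      obtain ⟨z, hz0, hz⟩ := ih
      by_cases hc : b ≤ a + k * δ
      · have h1 : min b (a + k * δ) = b := min_eq_left hc
        have h2 : min b (a + (k + 1 : ℕ) * δ) = b := by
          apply min_eq_left
          push_cast
          nlinarith
        rw [h2]; rw [h1] at hz
        exact ⟨z, hz0, hz⟩
      · push_neg at hc
        have hkδ : (0:ℝ) ≤ k * δ := by positivity
        have h1 : min b (a + k * δ) = a + k * δ := min_eq_right hc.le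
        set c : ℝ := a + k * δ with hcdef
        rw [h1] at hz
        have hcmem : c ∈ Icc a b := ⟨by linarith, hc.le⟩
        obtain ⟨w, hw0, hw⟩ := local_linear_ode M hM hL hbd hcmem (z c)
        have hd2 : min b (c + δ) = min b (a + (k+1:ℕ) * δ) := by
          rw [hcdef]; push_cast; ring_nf
        rw [hd2] at hw
        have hle1 : a ≤ c := by linarith
        have hle2 : c ≤ min b (a + (k+1:ℕ) * δ) := by
          apply le_min hc.le
          push_cast; nlinarith
        obtain ⟨u, hu1, hu2⟩ := glue_ode (fun t y => matL n (M t) y) hle1 hle2 hz hw hw0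
        exact ⟨u, by rw [hu1 a ⟨le_rfl, hle1⟩, hz0], hu2⟩
  obtain ⟨kk, hkk⟩ := exists_nat_ge ((b - a) / δ)
  obtain ⟨z, hz0, hz⟩ := key kk
  have : min b (a + kk * δ) = b := by
    apply min_eq_left
    rw [div_le_iff₀ hδ0] at hkk
    linarith
  rw [this] at hz
  exact ⟨z, hz0, hz⟩

/-- Backward nonvanishing for the linear ODE. -/
lemma linear_ode_nonvanish {n : ℕ} {a b : ℝ} (M : ℝ → Matrix (Fin n) (Fin n) ℝ)
    {L : ℝ} (hbd : ∀ t ∈ Icc a b, ‖M t‖ ≤ L)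
    {z : ℝ → EuclideanSpace ℝ (Fin n)}
    (hz : ∀ t ∈ Icc a b, HasDerivWithinAt z (matL n (M t) (z t)) (Icc a b) t)
    {t₁ t₂ : ℝ} (ht₁ : t₁ ∈ Icc a b) (ht₂ : t₂ ∈ Icc a b) (h12 : t₁ ≤ t₂)
    (hvan : z t₂ = 0) : z t₁ = 0 := by
  set y : ℝ → EuclideanSpace ℝ (Fin n) := fun s => z (t₁ + t₂ - s) with hy
  have hmap : ∀ s ∈ Icc t₁ t₂, t₁ + t₂ - s ∈ Icc a b := by
    intro s hs
    constructor
    · have := hs.2; linarith [ht₁.1]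
    · have := hs.1; linarith [ht₂.2]
  have hyderiv : ∀ s ∈ Icc t₁ t₂,
      HasDerivWithinAt y (-(matL n (M (t₁ + t₂ - s)) (y s))) (Icc t₁ t₂) s := by
    intro s hs
    have hinner : HasDerivWithinAt (fun s : ℝ => t₁ + t₂ - s) (-1) (Icc t₁ t₂) s := by
      simpa using (hasDerivWithinAt_id s (Icc t₁ t₂)).const_sub (t₁ + t₂)
    have houter := hz (t₁ + t₂ - s) (hmap s hs)
    have := HasDerivWithinAt.scomp s houter hinner (fun u hu => hmap u hu)
    rw [neg_one_smul] at this
    exact this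
  have hcont : ContinuousOn y (Icc t₁ t₂) :=
    fun s hs => ((hyderiv s hs).continuousWithinAt)
  have key : ∀ s ∈ Icc t₁ t₂, ‖y s‖ ≤ gronwallBound 0 L 0 (s - t₁) := by
    apply norm_le_gronwallBound_of_norm_deriv_right_le hcont
    · intro s hs
      exact ((hyderiv s ⟨hs.1, hs.2.le⟩).mono_of_mem_nhdsWithin
        (Icc_mem_nhdsGE_of_mem ⟨hs.1, hs.2⟩))
    · simp [hy, hvan]
    · intro s hs
      rw [norm_neg]
      calc ‖matL n (M (t₁ + t₂ - s)) (y s)‖ ≤ ‖M (t₁ + t₂ - s)‖ * ‖y s‖ :=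
            norm_matL_apply_le _ _
        _ ≤ L * ‖y s‖ + 0 := by
            nlinarith [hbd _ (hmap s ⟨hs.1, hs.2.le⟩), norm_nonneg (y s)]
  have h1 := key t₂ ⟨h12, le_rfl⟩
  rw [gronwallBound_ε0_δ0] at h1
  have h2 : ‖y t₂‖ ≤ 0 := by simpa using h1
  have h3 : y t₂ = 0 := by simpa using norm_le_zero_iff.mp h2
  simpa [hy] using h3

lemma quad_inv_antitone {k : ℕ} {K₁ K₂ : Matrix (Fin k) (Fin k) ℝ}
    (h₁ : K₁.PosDef) (h₂ : K₂.PosDef) (hle : (K₂ - K₁).PosSemidef) (v : Fin k → ℝ) :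
    (K₂⁻¹ *ᵥ v) ⬝ᵥ v ≤ (K₁⁻¹ *ᵥ v) ⬝ᵥ v := by
  have hd₁ : IsUnit K₁.det := isUnit_iff_ne_zero.mpr (ne_of_gt h₁.det_pos)
  have hd₂ : IsUnit K₂.det := isUnit_iff_ne_zero.mpr (ne_of_gt h₂.det_pos)
  set a : Fin k → ℝ := K₁⁻¹ *ᵥ v with ha
  set b : Fin k → ℝ := K₂⁻¹ *ᵥ v with hb
  have hva : K₁ *ᵥ a = v := by
    rw [ha, Matrix.mulVec_mulVec, Matrix.mul_nonsing_inv _ hd₁, Matrix.one_mulVec]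
  have hvb : K₂ *ᵥ b = v := by
    rw [hb, Matrix.mulVec_mulVec, Matrix.mul_nonsing_inv _ hd₂, Matrix.one_mulVec]
  have q1 : 0 ≤ (a - b) ⬝ᵥ (K₁ *ᵥ (a - b)) := by
    have := h₁.posSemidef.dotProduct_mulVec_nonneg (a - b); simpa using this
  have q2 : 0 ≤ b ⬝ᵥ ((K₂ - K₁) *ᵥ b) := by
    have := hle.dotProduct_mulVec_nonneg b; simpa using this
  have hK₁T : K₁ᵀ = K₁ := by
    have h := h₁.1
    rwa [Matrix.IsHermitian, Matrix.conjTranspose_eq_transpose_of_trivial] at h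
  have hsymm : b ⬝ᵥ (K₁ *ᵥ a) = a ⬝ᵥ (K₁ *ᵥ b) := by
    rw [Matrix.dotProduct_mulVec, ← Matrix.vecMul_transpose, hK₁T, dotProduct_comm]
  have e1 : (a - b) ⬝ᵥ (K₁ *ᵥ (a - b))
      = a ⬝ᵥ (K₁ *ᵥ a) - 2 * (b ⬝ᵥ (K₁ *ᵥ a)) + b ⬝ᵥ (K₁ *ᵥ b) := by
    rw [Matrix.mulVec_sub, sub_dotProduct, dotProduct_sub,
      dotProduct_sub, hsymm]
    ring
  have e2 : b ⬝ᵥ ((K₂ - K₁) *ᵥ b) = b ⬝ᵥ v - b ⬝ᵥ (K₁ *ᵥ b) := by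
    rw [Matrix.sub_mulVec, dotProduct_sub, hvb]
  have e5 : b ⬝ᵥ (K₁ *ᵥ a) = b ⬝ᵥ v := by rw [hva]
  show b ⬝ᵥ v ≤ a ⬝ᵥ v
  have e6 : a ⬝ᵥ v = a ⬝ᵥ (K₁ *ᵥ a) := by rw [hva]
  linarith [q1, q2, e1, e2, e5, e6]

/-- The key algebraic identity for the difference of two Riccati right-hand sides. -/
lemma riccati_diff_identity {n k : ℕ} (A X₁ X₂ : Matrix (Fin n) (Fin n) ℝ)
    (𝓑 W₁ W₂ : Matrix (Fin n) (Fin k) ℝ) (K₁i K₂i : Matrix (Fin k) (Fin k) ℝ)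
    (hW : W₁ = W₂ - (X₂ - X₁) * 𝓑) (hΔ : (X₂ - X₁)ᵀ = X₂ - X₁) (hK : K₁iᵀ = K₁i) :
    (W₂ * K₂i * W₂ᵀ - X₂ * A - Aᵀ * X₂) - (W₁ * K₁i * W₁ᵀ - X₁ * A - Aᵀ * X₁)
    = -((X₂ - X₁) * (A - 𝓑 * K₁i * W₂ᵀ)) - (A - 𝓑 * K₁i * W₂ᵀ)ᵀ * (X₂ - X₁)
      + (W₂ * (K₂i - K₁i) * W₂ᵀ - ((X₂ - X₁) * 𝓑) * K₁i * ((X₂ - X₁) * 𝓑)ᵀ) := by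
  subst hW
  have h1 : (W₂ - (X₂ - X₁) * 𝓑)ᵀ = W₂ᵀ - 𝓑ᵀ * (X₂ - X₁) := by
    rw [Matrix.transpose_sub, Matrix.transpose_mul, hΔ]
  have h2 : (A - 𝓑 * K₁i * W₂ᵀ)ᵀ = Aᵀ - W₂ * K₁i * 𝓑ᵀ := by
    rw [Matrix.transpose_sub, Matrix.transpose_mul,
      Matrix.transpose_mul, Matrix.transpose_transpose, hK, Matrix.mul_assoc]
  have h3 : ((X₂ - X₁) * 𝓑)ᵀ = 𝓑ᵀ * (X₂ - X₁) := by rw [Matrix.transpose_mul, hΔ]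
  rw [h1, h2, h3]
  simp only [sub_eq_add_neg, neg_add, Matrix.add_mul, Matrix.mul_add, Matrix.neg_mul,
    Matrix.mul_neg, neg_neg, Matrix.mul_assoc]
  abel

/-- The cancellation in the derivative of the quadratic observable. -/
lemma hderiv_value {n : ℕ} (Δv Mv Cv : Matrix (Fin n) (Fin n) ℝ) (hΔ : Δvᵀ = Δv)
    (u : Fin n → ℝ) :
    (Δv *ᵥ u) ⬝ᵥ (Mv *ᵥ u)
      + (((-(Δv * Mv) - Mvᵀ * Δv + Cv) *ᵥ u) ⬝ᵥ u + (Δv *ᵥ (Mv *ᵥ u)) ⬝ᵥ u)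
    = (Cv *ᵥ u) ⬝ᵥ u := by
  have key : ((Mvᵀ * Δv) *ᵥ u) ⬝ᵥ u = (Δv *ᵥ u) ⬝ᵥ (Mv *ᵥ u) := by
    rw [← Matrix.mulVec_mulVec, Matrix.mulVec_transpose, ← Matrix.dotProduct_mulVec]
  simp only [Matrix.add_mulVec, Matrix.sub_mulVec, Matrix.neg_mulVec,
    add_dotProduct, sub_dotProduct, neg_dotProduct,
    Matrix.mulVec_mulVec, key]
  ring

lemma posDef_of_close {n : ℕ} {A : Matrix (Fin n) (Fin n) ℝ} (hA : A.PosDef) :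
    ∃ ε > (0:ℝ), ∀ B : Matrix (Fin n) (Fin n) ℝ, B.IsHermitian → ‖B - A‖ < ε → B.PosDef := by
  rcases Nat.eq_zero_or_pos n with hn | hn
  · subst hn
    refine ⟨1, one_pos, fun B hB _ => posDef_iff_dotProduct_mulVec.mpr ⟨hB, fun x hx => absurd ?_ hx⟩⟩
    ext i; exact absurd i.2 (by omega)
  · set q : EuclideanSpace ℝ (Fin n) → ℝ := fun v => ⟪matL n A v, v⟫ with hq
    have hqcont : Continuous q := (matL n A).continuous.inner continuous_id
    have hsph : (Metric.sphere (0 : EuclideanSpace ℝ (Fin n)) 1).Nonempty := by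
      refine ⟨EuclideanSpace.single ⟨0, hn⟩ (1:ℝ), ?_⟩
      simp [EuclideanSpace.norm_single]
    obtain ⟨v₀, hv₀mem, hv₀min⟩ :=
      (isCompact_sphere (0 : EuclideanSpace ℝ (Fin n)) 1).exists_isMinOn hsph
        hqcont.continuousOn
    set m : ℝ := q v₀ with hm
    have hv₀norm : ‖v₀‖ = 1 := by simpa using hv₀mem
    have hv₀ne : (v₀ : Fin n → ℝ) ≠ 0 := by
      intro h
      have h0 : ‖v₀‖ = 0 := by
        have : v₀ = 0 := by ext i; exact congrFun h i
        simp [this]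
      rw [hv₀norm] at h0; norm_num at h0
    have hm0 : 0 < m := by
      rw [hm, hq]
      show 0 < ⟪matL n A v₀, v₀⟫
      rw [matL_inner]
      have := hA.dotProduct_mulVec_pos hv₀ne
      simpa [star_trivial, dotProduct_comm] using this
    have hscale : ∀ v : EuclideanSpace ℝ (Fin n), m * ‖v‖ ^ 2 ≤ ⟪matL n A v, v⟫ := by
      intro v
      rcases eq_or_ne v 0 with rfl | hv
      · simp
      · have hnv : (0:ℝ) < ‖v‖ := norm_pos_iff.mpr hv
        set w : EuclideanSpace ℝ (Fin n) := ‖v‖⁻¹ • v with hw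
        have hwmem : w ∈ Metric.sphere (0 : EuclideanSpace ℝ (Fin n)) 1 := by
          simp [hw, norm_smul, abs_of_pos (inv_pos.mpr hnv), inv_mul_cancel₀ hnv.ne']
        have hqw : m ≤ q w := hv₀min hwmem
        have hqw' : q w = ‖v‖⁻¹ ^ 2 * ⟪matL n A v, v⟫ := by
          rw [hq]
          show ⟪matL n A (‖v‖⁻¹ • v), ‖v‖⁻¹ • v⟫ = _
          rw [(matL n A).map_smul, real_inner_smul_left, real_inner_smul_right]
          ring
        rw [hqw'] at hqw
        have := mul_le_mul_of_nonneg_left hqw (le_of_lt (pow_pos hnv 2))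
        calc m * ‖v‖ ^ 2 = ‖v‖ ^ 2 * m := by ring
          _ ≤ ‖v‖ ^ 2 * (‖v‖⁻¹ ^ 2 * ⟪matL n A v, v⟫) := this
          _ = ⟪matL n A v, v⟫ := by field_simp
    refine ⟨m, hm0, fun B hB hBA => posDef_iff_dotProduct_mulVec.mpr ⟨hB, fun x hx => ?_⟩⟩
    set v : EuclideanSpace ℝ (Fin n) := (WithLp.equiv 2 _).symm x with hv
    have hvx : (v : Fin n → ℝ) = x := rfl
    have hvne : v ≠ 0 := by
      intro h; apply hx
      ext i; exact congrFun (congrArg (WithLp.equiv 2 _) h) i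
    have hnv : (0:ℝ) < ‖v‖ := norm_pos_iff.mpr hvne
    have hBA' : ⟪matL n (B - A) v, v⟫ ≥ -(‖B - A‖ * ‖v‖ ^ 2) := by
      have h1 : |⟪matL n (B - A) v, v⟫| ≤ ‖matL n (B - A) v‖ * ‖v‖ := abs_real_inner_le_norm _ _
      have h2 : ‖matL n (B - A) v‖ ≤ ‖B - A‖ * ‖v‖ := norm_matL_apply_le _ _
      have h3 : ‖matL n (B - A) v‖ * ‖v‖ ≤ ‖B - A‖ * ‖v‖ ^ 2 := by nlinarith [norm_nonneg v]
      nlinarith [abs_nonneg ⟪matL n (B - A) v, v⟫, neg_abs_le ⟪matL n (B - A) v, v⟫]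
    have hsplit : (B *ᵥ x) ⬝ᵥ x = ⟪matL n A v, v⟫ + ⟪matL n (B - A) v, v⟫ := by
      rw [matL_inner, matL_inner, hvx]
      rw [Matrix.sub_mulVec, sub_dotProduct]
      ring
    have hfin : 0 < (B *ᵥ x) ⬝ᵥ x := by
      rw [hsplit]
      have := hscale v
      have hquad : m * ‖v‖ ^ 2 - ‖B - A‖ * ‖v‖ ^ 2 > 0 := by
        nlinarith [sq_nonneg ‖v‖, pow_pos hnv 2]
      nlinarith
    simpa [star_trivial, dotProduct_comm] using hfin

/-- The analytic core: a comparison-flow argument. If `Δ` solves the Lyapunov-type equation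
`Δ' = -ΔM - MᵀΔ + C` with `C` pointwise nonpositive and `Δ(T)` positive definite, then
`Δ(t₁)` is positive definite. -/
lemma core_posdef {n : ℕ} {t₁ T : ℝ} (h1T : t₁ ≤ T)
    {Δ M C : ℝ → Matrix (Fin n) (Fin n) ℝ}
    (hM : ContinuousOn M (Icc t₁ T))
    (hΔd : ∀ s ∈ Icc t₁ T,
      HasDerivWithinAt Δ (-(Δ s * M s) - (M s)ᵀ * Δ s + C s) (Icc t₁ T) s)
    (hΔsym : ∀ s ∈ Icc t₁ T, (Δ s)ᵀ = Δ s)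
    (hC : ∀ s ∈ Icc t₁ T, ∀ u : Fin n → ℝ, (C s *ᵥ u) ⬝ᵥ u ≤ 0)
    (hT : (Δ T).PosDef) : (Δ t₁).PosDef := by
  rw [posDef_iff_dotProduct_mulVec]
  constructor
  · rw [Matrix.IsHermitian, Matrix.conjTranspose_eq_transpose_of_trivial]
    exact hΔsym t₁ ⟨le_rfl, h1T⟩
  intro x hx
  obtain ⟨L, hbd⟩ := IsCompact.exists_bound_of_continuousOn isCompact_Icc hM
  set xE : EuclideanSpace ℝ (Fin n) := (WithLp.equiv 2 _).symm x with hxE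
  have hxEne : xE ≠ 0 := by
    intro h; apply hx
    ext i; exact congrFun (congrArg (WithLp.equiv 2 _) h) i
  obtain ⟨z, hz0, hz⟩ := global_linear_ode h1T M hM xE
  set F : ℝ → ℝ := fun s => ⟪matL n (Δ s) (z s), z s⟫ with hF
  have hFd : ∀ s ∈ Icc t₁ T, HasDerivWithinAt F
      ((C s *ᵥ (z s : Fin n → ℝ)) ⬝ᵥ (z s : Fin n → ℝ)) (Icc t₁ T) s := by
    intro s hs
    have h1 : HasDerivWithinAt (fun r => matL n (Δ r))
        (matL n (-(Δ s * M s) - (M s)ᵀ * Δ s + C s)) (Icc t₁ T) s :=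
      (matL n).hasFDerivAt.comp_hasDerivWithinAt s (hΔd s hs)
    have h2 := h1.clm_apply (hz s hs)
    have h3 := HasDerivWithinAt.inner ℝ h2 (hz s hs)
    have hval : ⟪matL n (Δ s) (z s), matL n (M s) (z s)⟫
        + ⟪matL n (-(Δ s * M s) - (M s)ᵀ * Δ s + C s) (z s)
            + matL n (Δ s) (matL n (M s) (z s)), z s⟫
        = (C s *ᵥ (z s : Fin n → ℝ)) ⬝ᵥ (z s : Fin n → ℝ) := by
      rw [inner_add_left, matL_inner', matL_inner', matL_inner', matL_apply]
      exact hderiv_value _ _ _ (hΔsym s hs) _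
    rwa [hval] at h3
  have hFcont : ContinuousOn F (Icc t₁ T) := fun s hs => (hFd s hs).continuousWithinAt
  have hanti : AntitoneOn F (Icc t₁ T) := by
    apply antitoneOn_of_hasDerivWithinAt_nonpos (convex_Icc t₁ T) hFcont
      (f' := fun s => (C s *ᵥ (z s : Fin n → ℝ)) ⬝ᵥ (z s : Fin n → ℝ))
    · intro s hs
      rw [interior_Icc] at hs
      exact (hFd s (Ioo_subset_Icc_self hs)).mono interior_subset
    · intro s hs
      rw [interior_Icc] at hs
      exact hC s (Ioo_subset_Icc_self hs) _
  have hzT : z T ≠ 0 := by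
    intro h
    have := linear_ode_nonvanish M hbd hz ⟨le_rfl, h1T⟩ ⟨h1T, le_rfl⟩ h1T h
    rw [hz0] at this
    exact hxEne this
  have hFT : 0 < F T := by
    rw [hF]
    show 0 < ⟪matL n (Δ T) (z T), z T⟫
    rw [matL_inner']
    have hzTne : (z T : Fin n → ℝ) ≠ 0 := by
      intro h; apply hzT; ext i; exact congrFun h i
    have := hT.dotProduct_mulVec_pos hzTne
    simpa [star_trivial, dotProduct_comm] using this
  have hF1 : F T ≤ F t₁ := hanti ⟨le_rfl, h1T⟩ ⟨h1T, le_rfl⟩ h1T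
  have : 0 < F t₁ := lt_of_lt_of_le hFT hF1
  rw [hF] at this
  have h5 : (0:ℝ) < ⟪matL n (Δ t₁) (z t₁), z t₁⟫ := this
  rw [matL_inner', hz0] at h5
  simpa [star_trivial, dotProduct_comm, hxE] using h5

end RiccatiAux

/-- Strict comparison for the matrix Riccati differential equation: if two
solutions have terminal values `λ₁I` and `λ₂I` with `λ₁ < λ₂`, and the weighting matrices
`R + 𝒟ᵀΠᵢ𝒟` are positive definite along both solutions, then `Π₂(t) − Π₁(t)` is positive
definite for every `t ∈ [0,T]`. -/
theorem riccati_strict_comparison {n k : ℕ} {T : ℝ} (hT : 0 < T)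
    (A : ℝ → Matrix (Fin n) (Fin n) ℝ)
    (𝓑 S : ℝ → Matrix (Fin n) (Fin k) ℝ)
    (R : ℝ → Matrix (Fin k) (Fin k) ℝ)
    (𝒟 : Matrix (Fin n) (Fin k) ℝ)
    (hA : ContinuousOn A (Set.Icc 0 T)) (h𝓑 : ContinuousOn 𝓑 (Set.Icc 0 T))
    (hS : ContinuousOn S (Set.Icc 0 T)) (hR : ContinuousOn R (Set.Icc 0 T))
    (hRsymm : ∀ t ∈ Set.Icc 0 T, (R t).IsSymm)
    (P₁ P₂ : ℝ → Matrix (Fin n) (Fin n) ℝ)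
    (hP₁symm : ∀ t ∈ Set.Icc 0 T, (P₁ t).IsSymm)
    (hP₂symm : ∀ t ∈ Set.Icc 0 T, (P₂ t).IsSymm)
    (hP₁pd : ∀ t ∈ Set.Icc 0 T, (R t + 𝒟ᵀ * P₁ t * 𝒟).PosDef)
    (hP₂pd : ∀ t ∈ Set.Icc 0 T, (R t + 𝒟ᵀ * P₂ t * 𝒟).PosDef)
    (hP₁ode : ∀ t ∈ Set.Icc 0 T, HasDerivWithinAt P₁
      ((P₁ t * 𝓑 t + S t) * (R t + 𝒟ᵀ * P₁ t * 𝒟)⁻¹ * (P₁ t * 𝓑 t + S t)ᵀ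
        - P₁ t * A t - (A t)ᵀ * P₁ t) (Set.Icc 0 T) t)
    (hP₂ode : ∀ t ∈ Set.Icc 0 T, HasDerivWithinAt P₂
      ((P₂ t * 𝓑 t + S t) * (R t + 𝒟ᵀ * P₂ t * 𝒟)⁻¹ * (P₂ t * 𝓑 t + S t)ᵀ
        - P₂ t * A t - (A t)ᵀ * P₂ t) (Set.Icc 0 T) t)
    (lam₁ lam₂ : ℝ) (hlam : lam₁ < lam₂)
    (hP₁T : P₁ T = lam₁ • 1) (hP₂T : P₂ T = lam₂ • 1) :
    ∀ t ∈ Set.Icc 0 T, (P₂ t - P₁ t).PosDef := by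
  have hTmem : T ∈ Set.Icc (0:ℝ) T := ⟨hT.le, le_rfl⟩
  -- continuity of the solutions
  have hP₁cont : ContinuousOn P₁ (Set.Icc 0 T) := fun s hs => (hP₁ode s hs).continuousWithinAt
  have hP₂cont : ContinuousOn P₂ (Set.Icc 0 T) := fun s hs => (hP₂ode s hs).continuousWithinAt
  have hΔcont : ContinuousOn (fun s => P₂ s - P₁ s) (Set.Icc 0 T) := hP₂cont.sub hP₁cont
  have hK₁cont : ContinuousOn (fun s => R s + 𝒟ᵀ * P₁ s * 𝒟) (Set.Icc 0 T) :=
    hR.add (contOn_mmul (contOn_mmul continuousOn_const hP₁cont) continuousOn_const)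
  have hK₁icont : ContinuousOn (fun s => (R s + 𝒟ᵀ * P₁ s * 𝒟)⁻¹) (Set.Icc 0 T) := by
    simp only [Matrix.nonsing_inv_eq_ringInverse]
    intro s hs
    obtain ⟨u, hu⟩ := (Matrix.isUnit_iff_isUnit_det _).mpr
      (isUnit_iff_ne_zero.mpr (ne_of_gt (hP₁pd s hs).det_pos))
    have hca := NormedRing.inverse_continuousAt u
    rw [hu] at hca
    exact hca.comp_continuousWithinAt (f := fun s => R s + 𝒟ᵀ * P₁ s * 𝒟) (hK₁cont s hs)
  have hW₂cont : ContinuousOn (fun s => P₂ s * 𝓑 s + S s) (Set.Icc 0 T) :=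
    (contOn_mmul hP₂cont h𝓑).add hS
  have hMcont : ContinuousOn
      (fun s => A s - 𝓑 s * (R s + 𝒟ᵀ * P₁ s * 𝒟)⁻¹ * (P₂ s * 𝓑 s + S s)ᵀ) (Set.Icc 0 T) :=
    hA.sub (contOn_mmul (contOn_mmul h𝓑 hK₁icont) (contOn_transpose hW₂cont))
  -- symmetry facts
  have hΔsym : ∀ s ∈ Set.Icc 0 T, (P₂ s - P₁ s)ᵀ = P₂ s - P₁ s := by
    intro s hs
    rw [Matrix.transpose_sub, (hP₁symm s hs).eq, (hP₂symm s hs).eq]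
  have hK₁sym : ∀ s ∈ Set.Icc 0 T, (R s + 𝒟ᵀ * P₁ s * 𝒟)ᵀ = R s + 𝒟ᵀ * P₁ s * 𝒟 := by
    intro s hs
    rw [Matrix.transpose_add, (hRsymm s hs).eq, Matrix.transpose_mul, Matrix.transpose_mul,
      Matrix.transpose_transpose, (hP₁symm s hs).eq, Matrix.mul_assoc]
  have hK₁isym : ∀ s ∈ Set.Icc 0 T,
      ((R s + 𝒟ᵀ * P₁ s * 𝒟)⁻¹)ᵀ = (R s + 𝒟ᵀ * P₁ s * 𝒟)⁻¹ := by
    intro s hs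
    rw [Matrix.transpose_nonsing_inv, hK₁sym s hs]
  -- the differential equation for Δ in Lyapunov form
  have hΔode : ∀ s ∈ Set.Icc 0 T, HasDerivWithinAt (fun r => P₂ r - P₁ r)
      (-((P₂ s - P₁ s) * (A s - 𝓑 s * (R s + 𝒟ᵀ * P₁ s * 𝒟)⁻¹ * (P₂ s * 𝓑 s + S s)ᵀ))
        - (A s - 𝓑 s * (R s + 𝒟ᵀ * P₁ s * 𝒟)⁻¹ * (P₂ s * 𝓑 s + S s)ᵀ)ᵀ * (P₂ s - P₁ s)
        + ((P₂ s * 𝓑 s + S s) * ((R s + 𝒟ᵀ * P₂ s * 𝒟)⁻¹ - (R s + 𝒟ᵀ * P₁ s * 𝒟)⁻¹)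
            * (P₂ s * 𝓑 s + S s)ᵀ
          - ((P₂ s - P₁ s) * 𝓑 s) * (R s + 𝒟ᵀ * P₁ s * 𝒟)⁻¹ * ((P₂ s - P₁ s) * 𝓑 s)ᵀ))
      (Set.Icc 0 T) s := by
    intro s hs
    have h := (hP₂ode s hs).sub (hP₁ode s hs)
    have hW : P₁ s * 𝓑 s + S s = (P₂ s * 𝓑 s + S s) - (P₂ s - P₁ s) * 𝓑 s := by
      rw [Matrix.sub_mul]; abel
    have heq := riccati_diff_identity (A s) (P₁ s) (P₂ s) (𝓑 s) (P₁ s * 𝓑 s + S s)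
      (P₂ s * 𝓑 s + S s) ((R s + 𝒟ᵀ * P₁ s * 𝒟)⁻¹) ((R s + 𝒟ᵀ * P₂ s * 𝒟)⁻¹)
      hW (hΔsym s hs) (hK₁isym s hs)
    rw [heq] at h
    exact h
  -- nonpositivity of the C-term under positive semidefiniteness of Δ
  have hCle : ∀ s ∈ Set.Icc 0 T, (P₂ s - P₁ s).PosSemidef → ∀ u : Fin n → ℝ,
      (((P₂ s * 𝓑 s + S s) * ((R s + 𝒟ᵀ * P₂ s * 𝒟)⁻¹ - (R s + 𝒟ᵀ * P₁ s * 𝒟)⁻¹)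
            * (P₂ s * 𝓑 s + S s)ᵀ
          - ((P₂ s - P₁ s) * 𝓑 s) * (R s + 𝒟ᵀ * P₁ s * 𝒟)⁻¹ * ((P₂ s - P₁ s) * 𝓑 s)ᵀ) *ᵥ u)
        ⬝ᵥ u ≤ 0 := by
    intro s hs hpsd u
    rw [Matrix.sub_mulVec, sub_dotProduct]
    have h2 : 0 ≤ ((((P₂ s - P₁ s) * 𝓑 s) * (R s + 𝒟ᵀ * P₁ s * 𝒟)⁻¹
        * ((P₂ s - P₁ s) * 𝓑 s)ᵀ) *ᵥ u) ⬝ᵥ u := by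
      rw [quad_congr]
      have hK₁ipsd := ((hP₁pd s hs).inv).posSemidef
      have := hK₁ipsd.dotProduct_mulVec_nonneg (((P₂ s - P₁ s) * 𝓑 s)ᵀ *ᵥ u)
      simpa [star_trivial, dotProduct_comm] using this
    have h1 : (((P₂ s * 𝓑 s + S s) * ((R s + 𝒟ᵀ * P₂ s * 𝒟)⁻¹ - (R s + 𝒟ᵀ * P₁ s * 𝒟)⁻¹)
        * (P₂ s * 𝓑 s + S s)ᵀ) *ᵥ u) ⬝ᵥ u ≤ 0 := by
      rw [quad_congr, Matrix.sub_mulVec, sub_dotProduct]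
      have hKdiff : (R s + 𝒟ᵀ * P₂ s * 𝒟) - (R s + 𝒟ᵀ * P₁ s * 𝒟)
          = 𝒟ᵀ * (P₂ s - P₁ s) * 𝒟 := by
        rw [Matrix.mul_sub, Matrix.sub_mul]; abel
      have hpsd2 : ((R s + 𝒟ᵀ * P₂ s * 𝒟) - (R s + 𝒟ᵀ * P₁ s * 𝒟)).PosSemidef := by
        rw [hKdiff]
        have := hpsd.conjTranspose_mul_mul_same 𝒟
        rwa [Matrix.conjTranspose_eq_transpose_of_trivial] at this
      have := quad_inv_antitone (hP₁pd s hs) (hP₂pd s hs) hpsd2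
        ((P₂ s * 𝓑 s + S s)ᵀ *ᵥ u)
      linarith
    linarith
  -- Δ(T) is positive definite
  have hΔT : (P₂ T - P₁ T).PosDef := by
    rw [hP₂T, hP₁T, ← sub_smul]
    rw [posDef_iff_dotProduct_mulVec]
    constructor
    · simp [Matrix.IsHermitian]
    · intro x hx
      have hmv : ((lam₂ - lam₁) • (1 : Matrix (Fin n) (Fin n) ℝ)) *ᵥ x = (lam₂ - lam₁) • x := by
        rw [Matrix.smul_mulVec, Matrix.one_mulVec]
      rw [hmv, star_trivial, dotProduct_smul, smul_eq_mul]
      exact mul_pos (by linarith) (dotProduct_self_pos' hx)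
  -- instantiated core lemma
  have core : ∀ t₁ ∈ Set.Icc 0 T, (∀ u ∈ Set.Icc t₁ T, (P₂ u - P₁ u).PosSemidef) →
      (P₂ t₁ - P₁ t₁).PosDef := by
    intro t₁ ht₁ hpsd
    have hsub : Set.Icc t₁ T ⊆ Set.Icc 0 T := fun u hu => ⟨ht₁.1.trans hu.1, hu.2⟩
    exact core_posdef (Δ := fun r => P₂ r - P₁ r)
      (M := fun s => A s - 𝓑 s * (R s + 𝒟ᵀ * P₁ s * 𝒟)⁻¹ * (P₂ s * 𝓑 s + S s)ᵀ)
      (C := fun s => (P₂ s * 𝓑 s + S s)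
            * ((R s + 𝒟ᵀ * P₂ s * 𝒟)⁻¹ - (R s + 𝒟ᵀ * P₁ s * 𝒟)⁻¹) * (P₂ s * 𝓑 s + S s)ᵀ
          - ((P₂ s - P₁ s) * 𝓑 s) * (R s + 𝒟ᵀ * P₁ s * 𝒟)⁻¹ * ((P₂ s - P₁ s) * 𝓑 s)ᵀ)
      ht₁.2 (hMcont.mono hsub)
      (fun s hs => (hΔode s (hsub hs)).mono hsub)
      (fun s hs => hΔsym s (hsub hs))
      (fun s hs u => hCle s (hsub hs) (hpsd s hs) u)
      hΔT
  -- the set of times after which Δ is everywhere positive semidefinite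
  set G : Set ℝ := {r : ℝ | r ∈ Set.Icc 0 T ∧
    ∀ u ∈ Set.Icc r T, (P₂ u - P₁ u).PosSemidef} with hG
  have hTG : T ∈ G := by
    refine ⟨hTmem, fun u hu => ?_⟩
    have : u = T := le_antisymm hu.2 hu.1
    rw [this]; exact hΔT.posSemidef
  have hGbdd : BddBelow G := ⟨0, fun r hr => hr.1.1⟩
  have hGne : G.Nonempty := ⟨T, hTG⟩
  set s₀ : ℝ := sInf G with hs₀
  have hs₀T : s₀ ≤ T := csInf_le hGbdd hTG
  have hs₀0 : 0 ≤ s₀ := le_csInf hGne (fun r hr => hr.1.1)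
  have hs₀I : s₀ ∈ Set.Icc 0 T := ⟨hs₀0, hs₀T⟩
  have hpsd_gt : ∀ u ∈ Set.Icc 0 T, s₀ < u → (P₂ u - P₁ u).PosSemidef := by
    intro u hu hlt
    obtain ⟨r, hrG, hru⟩ := exists_lt_of_csInf_lt hGne hlt
    exact hrG.2 u ⟨hru.le, hu.2⟩
  have hs₀G : s₀ ∈ G := by
    refine ⟨hs₀I, fun u hu => ?_⟩
    rcases eq_or_lt_of_le hu.1 with h | h
    · -- u = s₀ : limit argument
      rcases eq_or_lt_of_le hs₀T with hT' | hT'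
      · rw [← h, hT']; exact hΔT.posSemidef
      rw [posSemidef_iff_dotProduct_mulVec]
      constructor
      · rw [Matrix.IsHermitian, Matrix.conjTranspose_eq_transpose_of_trivial]
        exact hΔsym u ⟨hs₀0.trans hu.1, hu.2⟩
      intro x
      rw [← h]
      have hqc : ContinuousWithinAt (fun r => ((P₂ r - P₁ r) *ᵥ x) ⬝ᵥ x)
          (Set.Icc 0 T) s₀ :=
        ((quad_cont x).continuousAt).comp_continuousWithinAt (hΔcont s₀ hs₀I)
      have hsubIoc : Set.Ioc s₀ T ⊆ Set.Icc 0 T :=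
        fun r hr => ⟨hs₀0.trans hr.1.le, hr.2⟩
      have htend : Filter.Tendsto (fun r => ((P₂ r - P₁ r) *ᵥ x) ⬝ᵥ x)
          (nhdsWithin s₀ (Set.Ioc s₀ T)) (nhds (((P₂ s₀ - P₁ s₀) *ᵥ x) ⬝ᵥ x)) :=
        (hqc.mono hsubIoc)
      haveI : (nhdsWithin s₀ (Set.Ioc s₀ T)).NeBot := by
        apply mem_closure_iff_nhdsWithin_neBot.mp
        rw [closure_Ioc hT'.ne]
        exact ⟨le_rfl, hs₀T⟩
      have hev : ∀ᶠ r in nhdsWithin s₀ (Set.Ioc s₀ T),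
          0 ≤ ((P₂ r - P₁ r) *ᵥ x) ⬝ᵥ x := by
        apply eventually_nhdsWithin_of_forall
        intro r hr
        have hpsdr := hpsd_gt r (hsubIoc hr) hr.1
        have := hpsdr.dotProduct_mulVec_nonneg x
        simpa [star_trivial, dotProduct_comm] using this
      have h0 : 0 ≤ ((P₂ s₀ - P₁ s₀) *ᵥ x) ⬝ᵥ x := ge_of_tendsto htend hev
      simpa [star_trivial, dotProduct_comm] using h0
    · exact hpsd_gt u ⟨hs₀0.trans hu.1, hu.2⟩ h
  -- the PSD property extends to all of [0,T]
  have hfinal_psd : ∀ u ∈ Set.Icc 0 T, (P₂ u - P₁ u).PosSemidef := by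
    intro u hu
    by_cases hcmp : s₀ ≤ u
    · exact hs₀G.2 u ⟨hcmp, hu.2⟩
    · exfalso
      push_neg at hcmp
      have hs₀pos : 0 < s₀ := lt_of_le_of_lt hu.1 hcmp
      have hPD := core s₀ hs₀I hs₀G.2
      obtain ⟨ε, hε, hball⟩ := posDef_of_close hPD
      have hcw : ContinuousWithinAt (fun r => P₂ r - P₁ r) (Set.Icc 0 T) s₀ :=
        hΔcont s₀ hs₀I
      rw [Metric.continuousWithinAt_iff] at hcw
      obtain ⟨δ, hδ0, hδ⟩ := hcw ε hε
      set t' : ℝ := max 0 (s₀ - δ/2) with ht'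
      have ht'0 : 0 ≤ t' := le_max_left _ _
      have ht's₀ : t' < s₀ := max_lt hs₀pos (by linarith)
      have ht'I : t' ∈ Set.Icc 0 T := ⟨ht'0, ht's₀.le.trans hs₀T⟩
      have ht'G : t' ∈ G := by
        refine ⟨ht'I, fun u' hu' => ?_⟩
        by_cases hcmp2 : s₀ ≤ u'
        · exact hs₀G.2 u' ⟨hcmp2, hu'.2⟩
        · push_neg at hcmp2
          have hu'I : u' ∈ Set.Icc 0 T := ⟨ht'0.trans hu'.1, hu'.2⟩
          have hdist : dist u' s₀ < δ := by
            rw [Real.dist_eq, abs_of_nonpos (by linarith)]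
            have h1 : s₀ - δ/2 ≤ t' := le_max_right _ _
            have h2 : t' ≤ u' := hu'.1
            linarith
          have hnear := hδ hu'I hdist
          rw [dist_eq_norm] at hnear
          have hherm : (P₂ u' - P₁ u').IsHermitian := by
            rw [Matrix.IsHermitian, Matrix.conjTranspose_eq_transpose_of_trivial]
            exact hΔsym u' hu'I
          exact (hball _ hherm hnear).posSemidef
      have := csInf_le hGbdd ht'G
      linarith
  -- conclusion
  intro t ht
  exact core t ht (fun u hu => hfinal_psd u ⟨ht.1.trans hu.1, hu.2⟩)
end

section
/- Let T > 0 and let A, C, S₁ : [0,T] → ℝ^{n×n}, B, S₂ : [0,T] → ℝ^{n×m}, R₁₁ : [0,T] → Sym(n), R₂₂ : [0,T] → Sym(m) be continuous with R₂₂(t) invertible for all t. Let Π : [0,T] → Sym(n) be differentiable, with Π(t) invertible and R₁₁(t) + Π(t) invertible for every t ∈ [0,T], satisfying the Π-Riccati equation Π'(t) + Π(t)A(t) + A(t)ᵀΠ(t) − (Π(t)C(t)+S₁(t))(R₁₁(t)+Π(t))⁻¹(C(t)ᵀΠ(t)+S₁(t)ᵀ) − (Π(t)B(t)+S₂(t))R₂₂(t)⁻¹(B(t)ᵀΠ(t)+S₂(t)ᵀ)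 = 0 for all t ∈ [0,T]. Then Υ := Π⁻¹ is differentiable on [0,T]; for each t the matrix I + Υ(t)R₁₁(t) is invertible with (I + Υ(t)R₁₁(t))⁻¹Υ(t) = (R₁₁(t)+Π(t))⁻¹; and Υ satisfies the Υ-Riccati equation Υ'(t) = Υ(t)A(t)ᵀ + A(t)Υ(t) − (C(t)+Υ(t)S₁(t))(I+Υ(t)R₁₁(t))⁻¹Υ(t)(C(t)ᵀ+S₁(t)ᵀΥ(t)) − (B(t)+Υ(t)S₂(t))R₂₂(t)⁻¹(B(t)ᵀ+S₂(t)ᵀΥ(t)) for all t ∈ [0,T]. -/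
open Matrix
open scoped Matrix.Norms.L2Operator

/-- If `Π` solves the Π-Riccati equation
`Π' + ΠA + AᵀΠ − (ΠC+S₁)(R₁₁+Π)⁻¹(CᵀΠ+S₁ᵀ) − (ΠB+S₂)R₂₂⁻¹(BᵀΠ+S₂ᵀ) = 0`
with `Π(t)` and `R₁₁(t)+Π(t)` invertible, then `Υ = Π⁻¹` is differentiable,
`I + Υ(t)R₁₁(t)` is invertible with `(I+ΥR₁₁)⁻¹Υ = (R₁₁+Π)⁻¹`, and `Υ` solves the
Υ-Riccati equation. -/
theorem riccati_inverse_transfer {n m : ℕ} {T : ℝ} (hT : 0 < T)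
    (A C S₁ : ℝ → Matrix (Fin n) (Fin n) ℝ)
    (B S₂ : ℝ → Matrix (Fin n) (Fin m) ℝ)
    (R₁₁ : ℝ → Matrix (Fin n) (Fin n) ℝ)
    (R₂₂ : ℝ → Matrix (Fin m) (Fin m) ℝ)
    (hA : ContinuousOn A (Set.Icc 0 T)) (hC : ContinuousOn C (Set.Icc 0 T))
    (hS₁ : ContinuousOn S₁ (Set.Icc 0 T)) (hB : ContinuousOn B (Set.Icc 0 T))
    (hS₂ : ContinuousOn S₂ (Set.Icc 0 T)) (hR₁₁ : ContinuousOn R₁₁ (Set.Icc 0 T))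
    (hR₂₂ : ContinuousOn R₂₂ (Set.Icc 0 T))
    (hR₁₁symm : ∀ t ∈ Set.Icc 0 T, (R₁₁ t).IsSymm)
    (hR₂₂symm : ∀ t ∈ Set.Icc 0 T, (R₂₂ t).IsSymm)
    (hR₂₂inv : ∀ t ∈ Set.Icc 0 T, IsUnit (R₂₂ t))
    (P : ℝ → Matrix (Fin n) (Fin n) ℝ)
    (hPsymm : ∀ t ∈ Set.Icc 0 T, (P t).IsSymm)
    (hPinv : ∀ t ∈ Set.Icc 0 T, IsUnit (P t))
    (hRPinv : ∀ t ∈ Set.Icc 0 T, IsUnit (R₁₁ t + P t))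
    (hPode : ∀ t ∈ Set.Icc 0 T, HasDerivWithinAt P
      ((P t * C t + S₁ t) * (R₁₁ t + P t)⁻¹ * ((C t)ᵀ * P t + (S₁ t)ᵀ)
        + (P t * B t + S₂ t) * (R₂₂ t)⁻¹ * ((B t)ᵀ * P t + (S₂ t)ᵀ)
        - P t * A t - (A t)ᵀ * P t) (Set.Icc 0 T) t) :
    ∀ t ∈ Set.Icc 0 T,
      IsUnit (1 + (P t)⁻¹ * R₁₁ t) ∧
      (1 + (P t)⁻¹ * R₁₁ t)⁻¹ * (P t)⁻¹ = (R₁₁ t + P t)⁻¹ ∧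
      HasDerivWithinAt (fun s => (P s)⁻¹)
        ((P t)⁻¹ * (A t)ᵀ + A t * (P t)⁻¹
          - (C t + (P t)⁻¹ * S₁ t) * (1 + (P t)⁻¹ * R₁₁ t)⁻¹ * (P t)⁻¹
              * ((C t)ᵀ + (S₁ t)ᵀ * (P t)⁻¹)
          - (B t + (P t)⁻¹ * S₂ t) * (R₂₂ t)⁻¹ * ((B t)ᵀ + (S₂ t)ᵀ * (P t)⁻¹))
        (Set.Icc 0 T) t := by
  intro t ht
  have hPu := hPinv t ht
  have hRPu := hRPinv t ht
  have hPdet : IsUnit (P t).det := (Matrix.isUnit_iff_isUnit_det _).mp hPu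
  have h1 : P t * (P t)⁻¹ = 1 := Matrix.mul_nonsing_inv _ hPdet
  have h2 : (P t)⁻¹ * P t = 1 := Matrix.nonsing_inv_mul _ hPdet
  set Q := (P t)⁻¹ with hQ
  have key : 1 + Q * R₁₁ t = Q * (R₁₁ t + P t) := by
    rw [mul_add, h2, add_comm]
  have hQu : IsUnit Q := by
    rw [hQ, ← hPu.unit_spec, ← Matrix.coe_units_inv]
    exact (hPu.unit⁻¹).isUnit
  have hUnit : IsUnit (1 + Q * R₁₁ t) := by
    rw [key]; exact hQu.mul hRPu
  have key2 : (1 + Q * R₁₁ t)⁻¹ * Q = (R₁₁ t + P t)⁻¹ := by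
    rw [key, Matrix.mul_inv_rev, hQ, Matrix.nonsing_inv_nonsing_inv _ hPdet,
      mul_assoc, h1, mul_one]
  refine ⟨hUnit, key2, ?_⟩
  -- derivative of the inverse
  set M := (P t * C t + S₁ t) * (R₁₁ t + P t)⁻¹ * ((C t)ᵀ * P t + (S₁ t)ᵀ)
        + (P t * B t + S₂ t) * (R₂₂ t)⁻¹ * ((B t)ᵀ * P t + (S₂ t)ᵀ)
        - P t * A t - (A t)ᵀ * P t with hM
  have hd : HasDerivWithinAt (fun s => (P s)⁻¹) (-(Q * M * Q)) (Set.Icc 0 T) t := by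
    have hd0 := (hasFDerivAt_ringInverse (𝕜 := ℝ) hPu.unit).comp_hasDerivWithinAt t
      (hPode t ht)
    simp only [Function.comp_def, ← Matrix.nonsing_inv_eq_ringInverse] at hd0
    simpa [Matrix.coe_units_inv, hPu.unit_spec, ← hM, ← hQ] using hd0
  have e1 : Q * (P t * C t + S₁ t) = C t + Q * S₁ t := by
    rw [mul_add, ← mul_assoc, h2, one_mul]
  have e2 : ((C t)ᵀ * P t + (S₁ t)ᵀ) * Q = (C t)ᵀ + (S₁ t)ᵀ * Q := by
    rw [add_mul, mul_assoc, h1, mul_one]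
  have e3 : Q * (P t * B t + S₂ t) = B t + Q * S₂ t := by
    rw [Matrix.mul_add, ← Matrix.mul_assoc, h2, Matrix.one_mul]
  have e4 : ((B t)ᵀ * P t + (S₂ t)ᵀ) * Q = (B t)ᵀ + (S₂ t)ᵀ * Q := by
    rw [Matrix.add_mul, Matrix.mul_assoc, h1, Matrix.mul_one]
  have expand : -(Q * M * Q) =
      Q * (A t)ᵀ + A t * Q
        - (C t + Q * S₁ t) * (R₁₁ t + P t)⁻¹ * ((C t)ᵀ + (S₁ t)ᵀ * Q)
        - (B t + Q * S₂ t) * (R₂₂ t)⁻¹ * ((B t)ᵀ + (S₂ t)ᵀ * Q) := by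
    have f1 : Q * ((P t * C t + S₁ t) * (R₁₁ t + P t)⁻¹ * ((C t)ᵀ * P t + (S₁ t)ᵀ)) * Q
        = (C t + Q * S₁ t) * (R₁₁ t + P t)⁻¹ * ((C t)ᵀ + (S₁ t)ᵀ * Q) := by
      rw [← e1, ← e2]; simp only [Matrix.mul_assoc]
    have f2 : Q * ((P t * B t + S₂ t) * (R₂₂ t)⁻¹ * ((B t)ᵀ * P t + (S₂ t)ᵀ)) * Q
        = (B t + Q * S₂ t) * (R₂₂ t)⁻¹ * ((B t)ᵀ + (S₂ t)ᵀ * Q) := by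
      rw [← e3, ← e4]; simp only [Matrix.mul_assoc]
    have f3 : Q * (P t * A t) * Q = A t * Q := by
      rw [← mul_assoc, h2, one_mul]
    have f4 : Q * ((A t)ᵀ * P t) * Q = Q * (A t)ᵀ := by
      rw [mul_assoc, mul_assoc, h1, mul_one]
    have hsplit : Q * M * Q
        = Q * ((P t * C t + S₁ t) * (R₁₁ t + P t)⁻¹ * ((C t)ᵀ * P t + (S₁ t)ᵀ)) * Q
          + Q * ((P t * B t + S₂ t) * (R₂₂ t)⁻¹ * ((B t)ᵀ * P t + (S₂ t)ᵀ)) * Q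
          - Q * (P t * A t) * Q - Q * ((A t)ᵀ * P t) * Q := by
      rw [hM]; noncomm_ring
    rw [hsplit, f1, f2, f3, f4]; noncomm_ring
  rw [expand] at hd
  have final : (C t + Q * S₁ t) * (1 + Q * R₁₁ t)⁻¹ * Q * ((C t)ᵀ + (S₁ t)ᵀ * Q)
      = (C t + Q * S₁ t) * (R₁₁ t + P t)⁻¹ * ((C t)ᵀ + (S₁ t)ᵀ * Q) := by
    rw [mul_assoc (C t + Q * S₁ t), key2]
  rw [final]
  exact hd
end
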